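/- arXiv:1909.00036 — 9 statements merged into one kernel-verified Lean document; each statement's English description precedes it below -/
import Mathlib

section
/- Let r ≥ 2. Let T, X¹, X⁰ : ℝ → ℝ be smooth with T′(t) ≠ 0 and X¹(t) ≠ 0 for all t, and with T surjective. Let A², …, A^r, A⁰, B : ℝ² → ℝ be smooth with A^r nowhere zero. Define functions Ã², …, Ã^r, Ã⁰, B̃ on ℝ² by requiring, for all (t,x) and with t̃ = T(t), x̃ = X¹(t)x + X⁰(t): Ã^j(t̃,x̃) = (X¹(t))^j A^j(t,x)/T′(t) for j = 2,…,r; Ã⁰(t̃,x̃) = (1/T′(t))·(A⁰(t,x) + 2X¹′(t)/X¹(t) − T″(t)/T′(t)); and B̃(t̃,x̃) = (X¹/T′²)·B(t,x) + (1/T′)·(d/dt)(X¹′/T′)·x + (1/T′)·(d/dt)(X⁰′/T′) − ((X¹′(t)x + X⁰′(t))/T′(t))·Ã⁰(t̃,x̃). Then for every solution u of u_t + u u_x = Σ_{j=2}^r A^j(t,x) u_j + A⁰(t,x) u + B(t,x) on ℝ², the transformed function ũ of u under (T, X¹, X⁰) solves ũ_t + ũ ũ_x = Σ_{j=2}^r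 Ã^j ũ_j + Ã⁰ ũ + B̃ on ℝ². -/
open Real Set

/-- Partial derivative of `u` with respect to time. -/
noncomputable def pdt (u : ℝ → ℝ → ℝ) (t x : ℝ) : ℝ := deriv (fun s => u s x) t

/-- `j`-th partial derivative of `u` with respect to space. -/
noncomputable def pdx (u : ℝ → ℝ → ℝ) (j : ℕ) (t x : ℝ) : ℝ := iteratedDeriv j (u t) x

lemma iterConstFun (c : ℝ) (n : ℕ) (x : ℝ) :
    iteratedDeriv n (fun _ : ℝ => c) x = if n = 0 then c else 0 := by
  induction n generalizing c x with
  | zero => simp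
  | succ n ih =>
    rw [iteratedDeriv_succ']
    have : deriv (fun _ : ℝ => c) = fun _ : ℝ => (0 : ℝ) := by
      funext z; simp
    rw [this, ih]
    simp

lemma iterAffine (q rr : ℝ) (n : ℕ) (hn : 1 ≤ n) (x : ℝ) :
    iteratedDeriv n (fun y => q * y + rr) x = if n = 1 then q else 0 := by
  obtain ⟨m, rfl⟩ := Nat.exists_eq_add_of_le hn
  rw [add_comm, iteratedDeriv_succ']
  have : deriv (fun y : ℝ => q * y + rr) = fun _ : ℝ => q := by
    funext z
    simpa using (((hasDerivAt_id z).const_mul q).add_const rr).deriv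
  rw [this, iterConstFun]
  rcases m with _ | m <;> simp

lemma iterAdd {f g : ℝ → ℝ} (hf : ContDiff ℝ (⊤ : ℕ∞) f) (hg : ContDiff ℝ (⊤ : ℕ∞) g) (n : ℕ) (x : ℝ) :
    iteratedDeriv n (fun y => f y + g y) x = iteratedDeriv n f x + iteratedDeriv n g x := by
  have := iteratedDerivWithin_add (Set.mem_univ x) uniqueDiffOn_univ
    (f := f) (g := g) (ContDiff.contDiffWithinAt (n := n) (hf.of_le (by exact_mod_cast le_top))) (ContDiff.contDiffWithinAt (n := n) (hg.of_le (by exact_mod_cast le_top)))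
  simpa [iteratedDerivWithin_univ, Pi.add_def] using this

lemma iterCMul {f : ℝ → ℝ} (hf : ContDiff ℝ (⊤ : ℕ∞) f) (p : ℝ) (n : ℕ) (x : ℝ) :
    iteratedDeriv n (fun y => p * f y) x = p * iteratedDeriv n f x := by
  have := iteratedDerivWithin_const_mul (Set.mem_univ x) uniqueDiffOn_univ
    (c := p) (f := f) (ContDiff.contDiffWithinAt (n := n) (hf.of_le (by exact_mod_cast le_top)))
  simpa [iteratedDerivWithin_univ] using this

lemma iterAffComp {g : ℝ → ℝ} (hg : ContDiff ℝ (⊤ : ℕ∞) g) (c d : ℝ) (n : ℕ) (x : ℝ) :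
    iteratedDeriv n (fun y => g (c * y + d)) x = c ^ n * iteratedDeriv n g (c * x + d) := by
  have h1 : ContDiff ℝ n (fun z : ℝ => g (z + d)) :=
    (hg.of_le (by exact_mod_cast le_top)).comp (contDiff_id.add contDiff_const)
  have h2 := iteratedDeriv_comp_const_mul h1 c
  have h3 := iteratedDeriv_comp_add_const n g d
  calc iteratedDeriv n (fun y => g (c * y + d)) x
      = iteratedDeriv n (fun y => (fun z : ℝ => g (z + d)) (c * y)) x := rfl
    _ = c ^ n * iteratedDeriv n (fun z : ℝ => g (z + d)) (c * x) := by rw [h2]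
    _ = c ^ n * iteratedDeriv n g (c * x + d) := by rw [h3]

lemma hasDerivAt_comp2 {u : ℝ → ℝ → ℝ}
    (hu : ContDiff ℝ (⊤ : ℕ∞) fun p : ℝ × ℝ => u p.1 p.2) {y : ℝ → ℝ} {y' t : ℝ}
    (hy : HasDerivAt y y' t) :
    HasDerivAt (fun s => u s (y s)) (pdt u t (y t) + pdx u 1 t (y t) * y') t := by
  set U := fun p : ℝ × ℝ => u p.1 p.2 with hU
  have hUd : DifferentiableAt ℝ U (t, y t) := (hu.differentiable (by simp)).differentiableAt
  set L := fderiv ℝ U (t, y t) with hLdef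
  have hL : HasFDerivAt U L (t, y t) := hUd.hasFDerivAt
  have hcurve : HasDerivAt (fun s => (s, y s)) ((1 : ℝ), y') t := (hasDerivAt_id t).prodMk hy
  have h1 : HasDerivAt (fun s => u s (y s)) (L (1, y')) t := by have := hL.comp_hasDerivAt t hcurve; exact this
  have e10 : pdt u t (y t) = L (1, 0) := by
    have hc : HasDerivAt (fun s => (s, y t)) ((1 : ℝ), (0 : ℝ)) t :=
      (hasDerivAt_id t).prodMk (hasDerivAt_const t (y t))
    have h2 : HasDerivAt (fun s => u s (y t)) (L (1, 0)) t := by have := hL.comp_hasDerivAt t hc; exact this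
    rw [pdt]; exact h2.deriv
  have e01 : pdx u 1 t (y t) = L (0, 1) := by
    have hc : HasDerivAt (fun x' => (t, x')) ((0 : ℝ), (1 : ℝ)) (y t) :=
      (hasDerivAt_const (y t) t).prodMk (hasDerivAt_id (y t))
    have h2 : HasDerivAt (fun x' => u t x') (L (0, 1)) (y t) := hL.comp_hasDerivAt (y t) hc
    rw [pdx, iteratedDeriv_one]; exact h2.deriv
  have key : L (1, y') = pdt u t (y t) + pdx u 1 t (y t) * y' := by
    have hsplit : ((1 : ℝ), y') = (1, 0) + y' • ((0 : ℝ), (1 : ℝ)) := by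
      ext <;> simp
    rw [hsplit, map_add, map_smul, e10, e01, smul_eq_mul]; ring
  rwa [key] at h1
set_option maxHeartbeats 4000000 in
theorem stmt0 (r : ℕ) (hr : 2 ≤ r)
    (T X1 X0 : ℝ → ℝ)
    (hT : ContDiff ℝ (⊤ : ℕ∞) T) (hX1 : ContDiff ℝ (⊤ : ℕ∞) X1) (hX0 : ContDiff ℝ (⊤ : ℕ∞) X0)
    (hT' : ∀ t : ℝ, deriv T t ≠ 0) (hX1ne : ∀ t : ℝ, X1 t ≠ 0)
    (hTsurj : Function.Surjective T)
    (A : ℕ → ℝ → ℝ → ℝ) (A0 B : ℝ → ℝ → ℝ)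
    (hA : ∀ j ∈ Finset.Icc 2 r, ContDiff ℝ (⊤ : ℕ∞) (fun p : ℝ × ℝ => A j p.1 p.2))
    (hA0 : ContDiff ℝ (⊤ : ℕ∞) (fun p : ℝ × ℝ => A0 p.1 p.2))
    (hB : ContDiff ℝ (⊤ : ℕ∞) (fun p : ℝ × ℝ => B p.1 p.2))
    (hAr : ∀ t x : ℝ, A r t x ≠ 0)
    (At : ℕ → ℝ → ℝ → ℝ) (A0t Bt : ℝ → ℝ → ℝ)
    (hAtdef : ∀ j ∈ Finset.Icc 2 r, ∀ t x : ℝ,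
      At j (T t) (X1 t * x + X0 t) = (X1 t) ^ j * A j t x / deriv T t)
    (hA0tdef : ∀ t x : ℝ,
      A0t (T t) (X1 t * x + X0 t)
        = (1 / deriv T t) *
            (A0 t x + 2 * deriv X1 t / X1 t - deriv (deriv T) t / deriv T t))
    (hBtdef : ∀ t x : ℝ,
      Bt (T t) (X1 t * x + X0 t)
        = X1 t / (deriv T t) ^ 2 * B t x
          + (1 / deriv T t) * deriv (fun s => deriv X1 s / deriv T s) t * x
          + (1 / deriv T t) * deriv (fun s => deriv X0 s / deriv T s) t
          - (deriv X1 t * x + deriv X0 t) / deriv T t * A0t (T t) (X1 t * x + X0 t))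
    (u : ℝ → ℝ → ℝ) (hu : ContDiff ℝ (⊤ : ℕ∞) (fun p : ℝ × ℝ => u p.1 p.2))
    (hueq : ∀ t x : ℝ,
      pdt u t x + u t x * pdx u 1 t x
        = ∑ j ∈ Finset.Icc 2 r, A j t x * pdx u j t x + A0 t x * u t x + B t x)
    (ut : ℝ → ℝ → ℝ) (hut : ContDiff ℝ (⊤ : ℕ∞) (fun p : ℝ × ℝ => ut p.1 p.2))
    (hutdef : ∀ t x : ℝ,
      ut (T t) (X1 t * x + X0 t)
        = X1 t / deriv T t * u t x + deriv X1 t / deriv T t * x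
          + deriv X0 t / deriv T t) :
    ∀ tt xt : ℝ,
      pdt ut tt xt + ut tt xt * pdx ut 1 tt xt
        = ∑ j ∈ Finset.Icc 2 r, At j tt xt * pdx ut j tt xt
          + A0t tt xt * ut tt xt + Bt tt xt := by
  intro tt xt
  obtain ⟨t, rfl⟩ := hTsurj tt
  -- abbreviations
  have hτ : deriv T t ≠ 0 := hT' t
  have hc : X1 t ≠ 0 := hX1ne t
  set y : ℝ → ℝ := fun s => (xt - X0 s) / X1 s with hydef
  set x : ℝ := y t with hxdef
  have hx : X1 t * x + X0 t = xt := by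
    rw [hxdef, hydef]; field_simp; ring
  have h_arg : ∀ s, X1 s * y s + X0 s = xt := by
    intro s; have := hX1ne s; rw [hydef]; field_simp; ring
  -- basic differentiability facts
  have hTN : ContDiff ℝ (⊤ : ℕ∞) T := hT.of_le (by simp)
  have hX1N : ContDiff ℝ (⊤ : ℕ∞) X1 := hX1.of_le (by simp)
  have hX0N : ContDiff ℝ (⊤ : ℕ∞) X0 := hX0.of_le (by simp)
  have hTder := contDiff_infty_iff_deriv.mp hTN
  have hX1der := contDiff_infty_iff_deriv.mp hX1N
  have hX0der := contDiff_infty_iff_deriv.mp hX0N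
  have hT'd : Differentiable ℝ (deriv T) := hTder.2.differentiable (by simp)
  have hX1'd : Differentiable ℝ (deriv X1) := hX1der.2.differentiable (by simp)
  have hX0'd : Differentiable ℝ (deriv X0) := hX0der.2.differentiable (by simp)
  have hTt : HasDerivAt T (deriv T t) t := (hTder.1 t).hasDerivAt
  have hX1t : HasDerivAt X1 (deriv X1 t) t := (hX1der.1 t).hasDerivAt
  have hX0t : HasDerivAt X0 (deriv X0 t) t := (hX0der.1 t).hasDerivAt
  have hT''t : HasDerivAt (deriv T) (deriv (deriv T) t) t := (hT'd t).hasDerivAt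
  -- P and Q
  have hPd : DifferentiableAt ℝ (fun s => deriv X1 s / deriv T s) t :=
    (hX1'd t).div (hT'd t) hτ
  have hQd : DifferentiableAt ℝ (fun s => deriv X0 s / deriv T s) t :=
    (hX0'd t).div (hT'd t) hτ
  set P : ℝ := deriv (fun s => deriv X1 s / deriv T s) t with hPdef
  set Q : ℝ := deriv (fun s => deriv X0 s / deriv T s) t with hQdef
  have hP : HasDerivAt (fun s => deriv X1 s / deriv T s) P t := hPd.hasDerivAt
  have hQ : HasDerivAt (fun s => deriv X0 s / deriv T s) Q t := hQd.hasDerivAt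
  -- derivative of y
  set y' : ℝ := ((0 - deriv X0 t) * X1 t - (xt - X0 t) * deriv X1 t) / X1 t ^ 2 with hy'def
  have hy : HasDerivAt y y' t :=
    ((hasDerivAt_const t xt).sub hX0t).div hX1t hc
  -- time derivative of the transformed function
  have hfeq : (fun s => ut (T s) xt)
      = fun s => X1 s / deriv T s * u s (y s) + deriv X1 s / deriv T s * y s
          + deriv X0 s / deriv T s := by
    funext s
    rw [← h_arg s, hutdef s (y s)]
  have h1 : HasDerivAt (fun s => X1 s / deriv T s)
      ((deriv X1 t * deriv T t - X1 t * deriv (deriv T) t) / deriv T t ^ 2) t :=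
    hX1t.div hT''t hτ
  have h2 : HasDerivAt (fun s => u s (y s)) (pdt u t x + pdx u 1 t x * y') t :=
    hasDerivAt_comp2 hu hy
  have hD : HasDerivAt (fun s => X1 s / deriv T s * u s (y s) + deriv X1 s / deriv T s * y s
      + deriv X0 s / deriv T s)
      (((deriv X1 t * deriv T t - X1 t * deriv (deriv T) t) / deriv T t ^ 2) * u t x
        + X1 t / deriv T t * (pdt u t x + pdx u 1 t x * y')
        + (P * x + deriv X1 t / deriv T t * y') + Q) t :=
    ((h1.mul h2).add (hP.mul hy)).add hQ
  have hcomp : HasDerivAt (fun s => ut (T s) xt) (pdt ut (T t) xt * deriv T t) t := by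
    have hgd : Differentiable ℝ (fun s' => ut s' xt) :=
      (hut.comp ((contDiff_id (𝕜 := ℝ) (E := ℝ)).prodMk contDiff_const)).differentiable (by simp)
    have hg : HasDerivAt (fun s' => ut s' xt) (pdt ut (T t) xt) (T t) := by
      rw [pdt]; exact (hgd (T t)).hasDerivAt
    exact hg.comp t hTt
  rw [hfeq] at hcomp
  have hpdtEq : pdt ut (T t) xt * deriv T t
      = ((deriv X1 t * deriv T t - X1 t * deriv (deriv T) t) / deriv T t ^ 2) * u t x
        + X1 t / deriv T t * (pdt u t x + pdx u 1 t x * y')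
        + (P * x + deriv X1 t / deriv T t * y') + Q := hcomp.unique hD
  have hpdt : pdt ut (T t) xt
      = (((deriv X1 t * deriv T t - X1 t * deriv (deriv T) t) / deriv T t ^ 2) * u t x
        + X1 t / deriv T t * (pdt u t x + pdx u 1 t x * y')
        + (P * x + deriv X1 t / deriv T t * y') + Q) / deriv T t := by
    rw [eq_div_iff hτ]; exact hpdtEq
  -- spatial derivatives
  have hut_slice : ContDiff ℝ (⊤ : ℕ∞) (ut (T t)) :=
    hut.comp (contDiff_const.prodMk contDiff_id)
  have hu_slice : ContDiff ℝ (⊤ : ℕ∞) (u t) :=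
    hu.comp (contDiff_const.prodMk contDiff_id)
  have hspace : ∀ j : ℕ, 1 ≤ j → X1 t ^ j * pdx ut j (T t) xt
      = X1 t / deriv T t * pdx u j t x + (if j = 1 then deriv X1 t / deriv T t else 0) := by
    intro j hj
    have e1 := iterAffComp hut_slice (X1 t) (X0 t) j x
    have e2 : (fun x' => ut (T t) (X1 t * x' + X0 t))
        = fun x' => X1 t / deriv T t * u t x'
            + (deriv X1 t / deriv T t * x' + deriv X0 t / deriv T t) := by
      funext x'; rw [hutdef t x']; ring
    have e3 : iteratedDeriv j (fun x' => X1 t / deriv T t * u t x'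
        + (deriv X1 t / deriv T t * x' + deriv X0 t / deriv T t)) x
        = X1 t / deriv T t * iteratedDeriv j (u t) x
          + (if j = 1 then deriv X1 t / deriv T t else 0) := by
      rw [iterAdd (f := fun x' => X1 t / deriv T t * u t x')
        (g := fun x' => deriv X1 t / deriv T t * x' + deriv X0 t / deriv T t)
        (contDiff_const.mul hu_slice)
        ((contDiff_const.mul contDiff_id).add contDiff_const) j x,
        iterCMul hu_slice, iterAffine _ _ j hj]
    rw [e2, e3] at e1
    rw [hx] at e1
    rw [pdx, pdx, ← e1]
  -- the first spatial derivative
  have hs1 := hspace 1 le_rfl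
  rw [pow_one, if_pos rfl] at hs1
  have hpdx1 : pdx ut 1 (T t) xt
      = (X1 t / deriv T t * pdx u 1 t x + deriv X1 t / deriv T t) / X1 t := by
    rw [eq_div_iff hc, mul_comm]; exact hs1
  -- the sum
  have hsum : ∑ j ∈ Finset.Icc 2 r, At j (T t) xt * pdx ut j (T t) xt
      = X1 t / deriv T t ^ 2 * ∑ j ∈ Finset.Icc 2 r, A j t x * pdx u j t x := by
    rw [Finset.mul_sum]
    refine Finset.sum_congr rfl fun j hj => ?_
    have hj2 : 2 ≤ j := (Finset.mem_Icc.mp hj).1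
    have hAt := hAtdef j hj t x
    rw [hx] at hAt
    have hsj := hspace j (by omega)
    rw [if_neg (by omega : ¬ j = 1), add_zero] at hsj
    have hcj : X1 t ^ j ≠ 0 := pow_ne_zero _ hc
    have hval : pdx ut j (T t) xt = X1 t / deriv T t * pdx u j t x / X1 t ^ j := by
      rw [eq_div_iff hcj, mul_comm]; exact hsj
    rw [hAt, hval]
    field_simp
  -- transformed coefficients at the point
  have hA0t := hA0tdef t x
  rw [hx] at hA0t
  have hBt := hBtdef t x
  rw [hx] at hBt
  have hutval := hutdef t x
  rw [hx] at hutval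
  -- the original equation
  have hU : ∑ j ∈ Finset.Icc 2 r, A j t x * pdx u j t x
      = pdt u t x + u t x * pdx u 1 t x - A0 t x * u t x - B t x := by
    have := hueq t x; linarith
  -- put everything together
  rw [hpdt, hpdx1, hutval, hsum, hU, hA0t, hBt, hA0t, hy'def, ← hx]
  field_simp
  ring
end

section
/- Normalization of the class of reduced general Burgers–KdV equations: let r ≥ 2, let A², …, A^r, A⁰, B and Ã², …, Ã^r, Ã⁰, B̃ be smooth functions on ℝ² with A^r and Ã^r nowhere zero. Let T : ℝ → ℝ be smooth and surjective with T′ nowhere zero, let X : ℝ² → ℝ be smooth with ∂X/∂x nowhere zero and with X(t,·) : ℝ → ℝ surjective for every t, let U¹ : ℝ → ℝ be smooth and nowhere zero, and let U⁰ : ℝ² → ℝ be smooth. Suppose that for every smooth u : ℝ² → ℝ and every point (t,x) at which u satisfies u_t + u u_x = Σ_{j=2}^r A^j u_j + A⁰ u + B, the function ũ defined by ũ(T(t), X(t,x)) = U¹(t)u(t,x) + U⁰(t,x) satisfies ũ_t + ũ ũ_x = Σ_{j=2}^r Ã^j ũ_j + Ã⁰ ũ + B̃ at the point (T(t), X(t,x)).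 Then ∂²X/∂x² = 0, so that X(t,x) = X¹(t)x + X⁰(t) for smooth functions X¹ (nowhere zero) and X⁰; moreover U¹ = X¹/T′, U⁰(t,x) = (X¹′(t)x + X⁰′(t))/T′(t), and for all (t,x), with t̃ = T(t), x̃ = X¹(t)x + X⁰(t): Ã^j(t̃,x̃) = (X¹)^j A^j(t,x)/T′, Ã⁰(t̃,x̃) = (1/T′)(A⁰(t,x) + 2X¹′/X¹ − T″/T′), and B̃(t̃,x̃) = (X¹/T′²)B(t,x) + (1/T′)(d/dt)(X¹′/T′)·x + (1/T′)(d/dt)(X⁰′/T′) − ((X¹′x + X⁰′)/T′)·Ã⁰(t̃,x̃). -/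
open Real Set

lemma itd_const (n : ℕ) (c : ℝ) :
    iteratedDeriv (n+1) (fun _ : ℝ => c) = fun _ => (0:ℝ) := by
  induction n generalizing c with
  | zero => rw [iteratedDeriv_one]; exact deriv_const' c
  | succ k ih =>
      rw [iteratedDeriv_succ',
        show deriv (fun _ : ℝ => c) = fun _ : ℝ => (0:ℝ) from deriv_const' c]
      exact ih 0

lemma itd_two (n : ℕ) (hn : n ≠ 0) (p q K : ℝ) {f g : ℝ → ℝ}
    (hf : ContDiff ℝ (⊤ : ℕ∞) f) (hg : ContDiff ℝ (⊤ : ℕ∞) g) (x : ℝ) :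
    iteratedDeriv n (fun y => p * f y + q * g y + K) x
      = p * iteratedDeriv n f x + q * iteratedDeriv n g x := by
  have h1 : (fun y => p * f y + q * g y + K) = fun y => K + (p * f y + q * g y) := by
    funext y; ring
  rw [h1, ← iteratedDerivWithin_univ]
  rw [iteratedDerivWithin_const_add (Nat.pos_of_ne_zero hn)]
  rw [show (fun y => p * f y + q * g y)
      = (fun y => p * f y) + (fun y => q * g y) from funext fun y => rfl]
  rw [iteratedDerivWithin_add (mem_univ x) uniqueDiffOn_univ
    ((contDiff_const.mul hf).of_le (by exact_mod_cast le_top)).contDiffWithinAt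
    ((contDiff_const.mul hg).of_le (by exact_mod_cast le_top)).contDiffWithinAt]
  rw [iteratedDerivWithin_const_mul (mem_univ x) uniqueDiffOn_univ _
    ((hf.of_le (by exact_mod_cast le_top)).contDiffWithinAt),
    iteratedDerivWithin_const_mul (mem_univ x) uniqueDiffOn_univ _
    ((hg.of_le (by exact_mod_cast le_top)).contDiffWithinAt),
    iteratedDerivWithin_univ, iteratedDerivWithin_univ]

lemma itd_pow (k : ℕ) : ∀ (j : ℕ) (x0 : ℝ),
    iteratedDeriv k (fun x : ℝ => (x - x0)^j)
      = fun x => (j.descFactorial k : ℝ) * (x - x0)^(j - k) := by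
  induction k with
  | zero => intro j x0; funext x; simp
  | succ k ih =>
      intro j x0
      rw [iteratedDeriv_succ']
      have hd : deriv (fun x : ℝ => (x - x0)^j) = fun x => (j:ℝ) * (x - x0)^(j-1) := by
        funext x
        have := (((hasDerivAt_id x).sub_const x0).pow j).deriv
        simpa using this
      rw [hd]
      have hcd : ContDiff ℝ (⊤ : ℕ∞) (fun x : ℝ => (x - x0)^(j-1)) :=
        (contDiff_id.sub contDiff_const).pow _
      have h2 : iteratedDeriv k (fun x : ℝ => (j:ℝ) * (x - x0)^(j-1))
          = fun x => (j:ℝ) * (((j-1).descFactorial k : ℝ) * (x-x0)^(j-1-k)) := by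
        funext x
        rw [← iteratedDerivWithin_univ,
          iteratedDerivWithin_const_mul (mem_univ x) uniqueDiffOn_univ _
            ((hcd.of_le (by exact_mod_cast le_top)).contDiffWithinAt),
          iteratedDerivWithin_univ, ih (j-1) x0]
      rw [h2]
      funext x
      rcases j with _ | j
      · simp
      · have : (j+1) - 1 - k = (j+1) - (k+1) := by omega
        rw [this, Nat.succ_sub_one, Nat.succ_descFactorial_succ]
        push_cast
        ring

lemma itd_pow_self (k j : ℕ) (x0 : ℝ) :
    iteratedDeriv k (fun x : ℝ => (x - x0)^j) x0 = if k = j then (j.factorial : ℝ) else 0 := by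
  rw [itd_pow]
  rcases lt_trichotomy k j with h | h | h
  · simp [sub_self, zero_pow (Nat.sub_ne_zero_of_lt h), if_neg h.ne]
  · subst h; simp [Nat.descFactorial_self]
  · rw [Nat.descFactorial_eq_zero_iff_lt.mpr h]; simp [if_neg h.ne']

lemma contDiff_omega_deriv {f : ℝ → ℝ} (hf : ContDiff ℝ (⊤ : ℕ∞) f) : ContDiff ℝ (⊤ : ℕ∞) (deriv f) := by
  exact (contDiff_infty_iff_deriv.mp hf).2

lemma alg1 (a p q q' w : ℝ) (hp : p ≠ 0) (hq : q ≠ 0) :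
    a / p + (q' * p + q * w) / p / (q * p) + q' / (q * p)
      = (1 / p) * (a + 2 * (q' * p + q * w) / (q * p) - w / p) := by
  field_simp; ring

lemma alg2 (p q q' d1 d0 D1 D0 b a0 x : ℝ) (hp : p ≠ 0) (hq : q ≠ 0) :
    - a0 * ((d1 * x + d0) / p) / p + q * b / p
      - (d1 * x + d0) / p * (d1 / p) / (q * p)
      + (D1 * x + D0) / p
      - q' * ((d1 * x + d0) / p) / (q * p)
      = q * p / p ^ 2 * b + 1 / p * D1 * x + 1 / p * D0
        - (d1 * x + d0) / p * (a0 / p + d1 / p / (q * p) + q' / (q * p)) := by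
  field_simp; ring

set_option maxHeartbeats 1000000 in
theorem stmt1 (r : ℕ) (hr : 2 ≤ r)
    (A : ℕ → ℝ → ℝ → ℝ) (A0 B : ℝ → ℝ → ℝ)
    (At : ℕ → ℝ → ℝ → ℝ) (A0t Bt : ℝ → ℝ → ℝ)
    (hA : ∀ j ∈ Finset.Icc 2 r, ContDiff ℝ (⊤ : ℕ∞) (fun p : ℝ × ℝ => A j p.1 p.2))
    (hA0 : ContDiff ℝ (⊤ : ℕ∞) (fun p : ℝ × ℝ => A0 p.1 p.2))
    (hB : ContDiff ℝ (⊤ : ℕ∞) (fun p : ℝ × ℝ => B p.1 p.2))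
    (hAt : ∀ j ∈ Finset.Icc 2 r, ContDiff ℝ (⊤ : ℕ∞) (fun p : ℝ × ℝ => At j p.1 p.2))
    (hA0t : ContDiff ℝ (⊤ : ℕ∞) (fun p : ℝ × ℝ => A0t p.1 p.2))
    (hBt : ContDiff ℝ (⊤ : ℕ∞) (fun p : ℝ × ℝ => Bt p.1 p.2))
    (hAr : ∀ t x : ℝ, A r t x ≠ 0) (hAtr : ∀ t x : ℝ, At r t x ≠ 0)
    (T : ℝ → ℝ) (hT : ContDiff ℝ (⊤ : ℕ∞) T) (hTsurj : Function.Surjective T)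
    (hT' : ∀ t : ℝ, deriv T t ≠ 0)
    (X : ℝ → ℝ → ℝ) (hX : ContDiff ℝ (⊤ : ℕ∞) (fun p : ℝ × ℝ => X p.1 p.2))
    (hXx : ∀ t x : ℝ, deriv (X t) x ≠ 0)
    (hXsurj : ∀ t : ℝ, Function.Surjective (X t))
    (U1 : ℝ → ℝ) (hU1 : ContDiff ℝ (⊤ : ℕ∞) U1) (hU1ne : ∀ t : ℝ, U1 t ≠ 0)
    (U0 : ℝ → ℝ → ℝ) (hU0 : ContDiff ℝ (⊤ : ℕ∞) (fun p : ℝ × ℝ => U0 p.1 p.2))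
    (hmap : ∀ u ut : ℝ → ℝ → ℝ,
      ContDiff ℝ (⊤ : ℕ∞) (fun p : ℝ × ℝ => u p.1 p.2) →
      ContDiff ℝ (⊤ : ℕ∞) (fun p : ℝ × ℝ => ut p.1 p.2) →
      (∀ t x : ℝ, ut (T t) (X t x) = U1 t * u t x + U0 t x) →
      ∀ t x : ℝ,
        (pdt u t x + u t x * pdx u 1 t x
          = ∑ j ∈ Finset.Icc 2 r, A j t x * pdx u j t x + A0 t x * u t x + B t x) →
        pdt ut (T t) (X t x) + ut (T t) (X t x) * pdx ut 1 (T t) (X t x)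
          = ∑ j ∈ Finset.Icc 2 r, At j (T t) (X t x) * pdx ut j (T t) (X t x)
            + A0t (T t) (X t x) * ut (T t) (X t x) + Bt (T t) (X t x)) :
    (∀ t x : ℝ, deriv (deriv (X t)) x = 0) ∧
    ∃ X1 X0 : ℝ → ℝ, ContDiff ℝ (⊤ : ℕ∞) X1 ∧ ContDiff ℝ (⊤ : ℕ∞) X0 ∧ (∀ t : ℝ, X1 t ≠ 0) ∧
      (∀ t x : ℝ, X t x = X1 t * x + X0 t) ∧
      (∀ t : ℝ, U1 t = X1 t / deriv T t) ∧
      (∀ t x : ℝ, U0 t x = (deriv X1 t * x + deriv X0 t) / deriv T t) ∧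
      (∀ j ∈ Finset.Icc 2 r, ∀ t x : ℝ,
        At j (T t) (X1 t * x + X0 t) = (X1 t) ^ j * A j t x / deriv T t) ∧
      (∀ t x : ℝ,
        A0t (T t) (X1 t * x + X0 t)
          = (1 / deriv T t) *
              (A0 t x + 2 * deriv X1 t / X1 t - deriv (deriv T) t / deriv T t)) ∧
      (∀ t x : ℝ,
        Bt (T t) (X1 t * x + X0 t)
          = X1 t / (deriv T t) ^ 2 * B t x
            + (1 / deriv T t) * deriv (fun s => deriv X1 s / deriv T s) t * x
            + (1 / deriv T t) * deriv (fun s => deriv X0 s / deriv T s) t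
            - (deriv X1 t * x + deriv X0 t) / deriv T t
              * A0t (T t) (X1 t * x + X0 t)) := by
  -- ## preliminaries
  have hdT : ContDiff ℝ (⊤ : ℕ∞) (deriv T) := contDiff_omega_deriv hT
  have hXt : ∀ x : ℝ, ContDiff ℝ (⊤ : ℕ∞) (fun t => X t x) := fun x =>
    hX.comp (contDiff_id.prodMk contDiff_const)
  have hXs : ∀ t : ℝ, ContDiff ℝ (⊤ : ℕ∞) (X t) := fun t =>
    hX.comp (contDiff_const.prodMk contDiff_id)
  have hU0t : ∀ x : ℝ, ContDiff ℝ (⊤ : ℕ∞) (fun t => U0 t x) := fun x =>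
    hU0.comp (contDiff_id.prodMk contDiff_const)
  have hU0s : ∀ t : ℝ, ContDiff ℝ (⊤ : ℕ∞) (fun y => U0 t y) := fun t =>
    hU0.comp (contDiff_const.prodMk contDiff_id)
  -- ## the affine master identity
  have master : ∀ (t0 x0 a0 a1 : ℝ),
      (a1 * (∑ j ∈ Finset.Icc 2 r, A j t0 x0 * iteratedDeriv j (X t0) x0)
          - (∑ j ∈ Finset.Icc 2 r, A j t0 x0 * iteratedDeriv j (fun y => U0 t0 y) x0))
        / deriv T t0
      + A0 t0 x0 * (a0 - U0 t0 x0) / deriv T t0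
      + U1 t0 * B t0 x0 / deriv T t0
      - (a0 - U0 t0 x0) * (a1 * deriv (X t0) x0 - deriv (fun y => U0 t0 y) x0)
          / (U1 t0 * deriv T t0)
      - (a1 * deriv (fun s => X s x0) t0 - deriv (fun s => U0 s x0) t0) / deriv T t0
      + deriv U1 t0 * (a0 - U0 t0 x0) / (U1 t0 * deriv T t0)
      + a0 * a1
      = A0t (T t0) (X t0 x0) * a0 + Bt (T t0) (X t0 x0) := by
    intro t0 x0 a0 a1
    have hQ0 : U1 t0 ≠ 0 := hU1ne t0
    have hP0 : deriv T t0 ≠ 0 := hT' t0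
    set c : ℝ :=
      (a1 * (∑ j ∈ Finset.Icc 2 r, A j t0 x0 * iteratedDeriv j (X t0) x0)
          - (∑ j ∈ Finset.Icc 2 r, A j t0 x0 * iteratedDeriv j (fun y => U0 t0 y) x0))
        / deriv T t0
      + A0 t0 x0 * (a0 - U0 t0 x0) / deriv T t0
      + U1 t0 * B t0 x0 / deriv T t0
      - (a0 - U0 t0 x0) * (a1 * deriv (X t0) x0 - deriv (fun y => U0 t0 y) x0)
          / (U1 t0 * deriv T t0)
      - (a1 * deriv (fun s => X s x0) t0 - deriv (fun s => U0 s x0) t0) / deriv T t0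
      + deriv U1 t0 * (a0 - U0 t0 x0) / (U1 t0 * deriv T t0) with hc
    set ut : ℝ → ℝ → ℝ := fun s y => a0 + a1 * (y - X t0 x0) + c * (s - T t0) with hut
    set u : ℝ → ℝ → ℝ := fun t x =>
      (a0 + a1 * (X t x - X t0 x0) + c * (T t - T t0) - U0 t x) / U1 t with hu
    -- smoothness of u
    have hucd : ContDiff ℝ (⊤ : ℕ∞) (fun p : ℝ × ℝ => u p.1 p.2) := by
      simp only [hu]
      exact (((contDiff_const.add (contDiff_const.mul (hX.sub contDiff_const))).add
        (contDiff_const.mul ((hT.comp contDiff_fst).sub contDiff_const))).sub hU0).div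
        (hU1.comp contDiff_fst) (fun p => hU1ne p.1)
    -- smoothness of ut
    have hutcd : ContDiff ℝ (⊤ : ℕ∞) (fun p : ℝ × ℝ => ut p.1 p.2) := by
      simp only [hut]
      exact (contDiff_const.add (contDiff_const.mul (contDiff_snd.sub contDiff_const))).add
        (contDiff_const.mul (contDiff_fst.sub contDiff_const))
    -- relation
    have hrel : ∀ t x : ℝ, ut (T t) (X t x) = U1 t * u t x + U0 t x := by
      intro t x
      simp only [hu, hut]
      field_simp [hU1ne t]
      ring
    -- derivative computations for u
    have hXTd : HasDerivAt (fun s => X s x0) (deriv (fun s => X s x0) t0) t0 :=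
      (((hXt x0).differentiable (by simp)) t0).hasDerivAt
    have hTd : HasDerivAt T (deriv T t0) t0 := ((hT.differentiable (by simp)) t0).hasDerivAt
    have hU0d : HasDerivAt (fun s => U0 s x0) (deriv (fun s => U0 s x0) t0) t0 :=
      (((hU0t x0).differentiable (by simp)) t0).hasDerivAt
    have hU1d : HasDerivAt U1 (deriv U1 t0) t0 := ((hU1.differentiable (by simp)) t0).hasDerivAt
    have hN : HasDerivAt
        (fun s => a0 + a1 * (X s x0 - X t0 x0) + c * (T s - T t0) - U0 s x0)
        (a1 * deriv (fun s => X s x0) t0 + c * deriv T t0 - deriv (fun s => U0 s x0) t0) t0 :=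
      ((((hXTd.sub_const (X t0 x0)).const_mul a1).const_add a0).add
        ((hTd.sub_const (T t0)).const_mul c)).sub hU0d
    have hq : HasDerivAt (fun s => u s x0)
        (((a1 * deriv (fun s => X s x0) t0 + c * deriv T t0 - deriv (fun s => U0 s x0) t0)
            * U1 t0
          - (a0 + a1 * (X t0 x0 - X t0 x0) + c * (T t0 - T t0) - U0 t0 x0) * deriv U1 t0)
          / U1 t0 ^ 2) t0 := by
      simp only [hu]
      exact hN.div hU1d hQ0
    have hpdt : pdt u t0 x0 =
        ((a1 * deriv (fun s => X s x0) t0 + c * deriv T t0 - deriv (fun s => U0 s x0) t0)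
            * U1 t0
          - (a0 + a1 * (X t0 x0 - X t0 x0) + c * (T t0 - T t0) - U0 t0 x0) * deriv U1 t0)
          / U1 t0 ^ 2 := by
      simp only [pdt]
      exact hq.deriv
    -- spatial derivatives of u at t0
    have hfun : (fun x => u t0 x) = fun x =>
        (a1 / U1 t0) * X t0 x + (-(1:ℝ) / U1 t0) * U0 t0 x
          + ((a0 + c * (T t0 - T t0) - a1 * X t0 x0) / U1 t0) := by
      funext x
      simp only [hu]
      ring
    have hpdxj : ∀ j, j ≠ 0 → pdx u j t0 x0 =
        (a1 / U1 t0) * iteratedDeriv j (X t0) x0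
          + (-(1:ℝ) / U1 t0) * iteratedDeriv j (fun y => U0 t0 y) x0 := by
      intro j hj0
      simp only [pdx]
      have : u t0 = fun x => u t0 x := rfl
      rw [this, hfun]
      exact itd_two j hj0 _ _ _ (hXs t0) (hU0s t0) x0
    have hpdx1 : pdx u 1 t0 x0 =
        (a1 / U1 t0) * deriv (X t0) x0 + (-(1:ℝ) / U1 t0) * deriv (fun y => U0 t0 y) x0 := by
      rw [hpdxj 1 one_ne_zero, iteratedDeriv_one, iteratedDeriv_one]
    have hsum : ∑ j ∈ Finset.Icc 2 r, A j t0 x0 * pdx u j t0 x0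
        = (a1 / U1 t0) * (∑ j ∈ Finset.Icc 2 r, A j t0 x0 * iteratedDeriv j (X t0) x0)
          - (1 / U1 t0) * (∑ j ∈ Finset.Icc 2 r,
              A j t0 x0 * iteratedDeriv j (fun y => U0 t0 y) x0) := by
      rw [Finset.mul_sum, Finset.mul_sum, ← Finset.sum_sub_distrib]
      apply Finset.sum_congr rfl
      intro j hj
      rw [hpdxj j (by have := (Finset.mem_Icc.mp hj).1; omega)]
      ring
    -- the PDE for u at (t0, x0)
    have hE : pdt u t0 x0 + u t0 x0 * pdx u 1 t0 x0
        = ∑ j ∈ Finset.Icc 2 r, A j t0 x0 * pdx u j t0 x0 + A0 t0 x0 * u t0 x0 + B t0 x0 := by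
      rw [hpdt, hpdx1, hsum]
      simp only [hu]
      rw [hc]
      field_simp
      ring
    -- apply the transformation hypothesis
    have key := hmap u ut hucd hutcd hrel t0 x0 hE
    -- compute the transformed derivatives
    have hpdtut : pdt ut (T t0) (X t0 x0) = c := by
      simp only [pdt, hut]
      have h : HasDerivAt (fun s => a0 + a1 * (X t0 x0 - X t0 x0) + c * (s - T t0)) c (T t0) := by
        have := (((hasDerivAt_id (T t0)).sub_const (T t0)).const_mul c).const_add
          (a0 + a1 * (X t0 x0 - X t0 x0))
        simpa using this
      exact h.deriv
    have hutval : ut (T t0) (X t0 x0) = a0 := by simp [hut]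
    have hpdxut1 : pdx ut 1 (T t0) (X t0 x0) = a1 := by
      simp only [pdx, hut, iteratedDeriv_one]
      have h : HasDerivAt (fun y => a0 + a1 * (y - X t0 x0) + c * (T t0 - T t0)) a1 (X t0 x0) := by
        have := ((((hasDerivAt_id (X t0 x0)).sub_const (X t0 x0)).const_mul a1).const_add
          a0).add_const (c * (T t0 - T t0))
        simpa using this
      exact h.deriv
    have hpdxutj : ∀ j ∈ Finset.Icc 2 r, pdx ut j (T t0) (X t0 x0) = 0 := by
      intro j hj
      have hj2 : 2 ≤ j := (Finset.mem_Icc.mp hj).1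
      simp only [pdx, hut]
      have hfn : (fun y => a0 + a1 * (y - X t0 x0) + c * (T t0 - T t0))
          = fun y => a1 * (y - X t0 x0)^1 + (0:ℝ) * y + (a0 + c * (T t0 - T t0)) := by
        funext y; ring
      have h2 := itd_two j (show j ≠ 0 by omega) a1 0 (a0 + c * (T t0 - T t0))
        (f := fun y => (y - X t0 x0)^1) (g := fun y => y)
        ((contDiff_id.sub contDiff_const).pow 1) contDiff_id (X t0 x0)
      rw [hfn, h2, itd_pow_self, if_neg (by omega)]
      ring
    have hsumut : ∑ j ∈ Finset.Icc 2 r, At j (T t0) (X t0 x0) * pdx ut j (T t0) (X t0 x0)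
        = 0 :=
      Finset.sum_eq_zero fun j hj => by rw [hpdxutj j hj, mul_zero]
    rw [hpdtut, hutval, hpdxut1, hsumut, zero_add] at key
    exact key
  -- ## Step 1: X is affine in x
  set X1 : ℝ → ℝ := fun t => U1 t * deriv T t with hX1
  have hdel : ∀ t x : ℝ, deriv (X t) x = X1 t := by
    intro t x
    have h00 := master t x 0 0
    have h10 := master t x 1 0
    have h01 := master t x 0 1
    have h11 := master t x 1 1
    have e : deriv (X t) x / (U1 t * deriv T t) = 1 := by
      linear_combination h10 + h01 - h11 - h00
    have h2 : deriv (X t) x = U1 t * deriv T t :=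
      (div_eq_one_iff_eq (mul_ne_zero (hU1ne t) (hT' t))).mp e
    rw [h2]
  have hX1cd : ContDiff ℝ (⊤ : ℕ∞) X1 := by rw [hX1]; exact hU1.mul hdT
  have hX1ne : ∀ t, X1 t ≠ 0 := by
    intro t; rw [hX1]; exact mul_ne_zero (hU1ne t) (hT' t)
  have hDD : ∀ t x : ℝ, deriv (deriv (X t)) x = 0 := by
    intro t x
    rw [show deriv (X t) = fun _ => X1 t from funext fun y => hdel t y]
    simp
  set X0f : ℝ → ℝ := fun t => X t 0 with hX0f
  have hX0cd : ContDiff ℝ (⊤ : ℕ∞) X0f := by rw [hX0f]; exact hXt 0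
  have hlin : ∀ t x : ℝ, X t x = X1 t * x + X0f t := by
    intro t x
    have hdiff : Differentiable ℝ (fun y => X t y - X1 t * y) :=
      ((hXs t).differentiable (by simp)).sub (differentiable_id.const_mul (X1 t))
    have hzero : ∀ y, deriv (fun y => X t y - X1 t * y) y = 0 := by
      intro y
      have h1 : HasDerivAt (fun y => X t y - X1 t * y) (deriv (X t) y - X1 t * 1) y :=
        ((((hXs t).differentiable (by simp)) y).hasDerivAt).sub
          ((hasDerivAt_id y).const_mul (X1 t))
      rw [h1.deriv, hdel t y]; ring
    have h2 := is_const_of_deriv_eq_zero hdiff hzero x 0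
    rw [mul_zero, sub_zero] at h2
    simp only [hX0f]
    linarith [h2]
  have hXj0 : ∀ (t x : ℝ) (j : ℕ), 2 ≤ j → iteratedDeriv j (X t) x = 0 := by
    intro t x j hj
    obtain ⟨k, rfl⟩ : ∃ k, j = (k + 1) + 1 := ⟨j - 2, by omega⟩
    rw [iteratedDeriv_succ',
      show deriv (X t) = fun _ => X1 t from funext fun y => hdel t y, itd_const]
  have hU0form : ∀ t x : ℝ, U0 t x = (deriv X1 t * x + deriv X0f t) / deriv T t := by
    intro t x
    have h00 := master t x 0 0
    have h01 := master t x 0 1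
    have e : (∑ j ∈ Finset.Icc 2 r, A j t x * iteratedDeriv j (X t) x) / deriv T t
        + U0 t x * deriv (X t) x / (U1 t * deriv T t)
        - deriv (fun s => X s x) t / deriv T t = 0 := by
      linear_combination h01 - h00
    have hsx : (∑ j ∈ Finset.Icc 2 r, A j t x * iteratedDeriv j (X t) x) = 0 :=
      Finset.sum_eq_zero fun j hj => by
        rw [hXj0 t x j (Finset.mem_Icc.mp hj).1, mul_zero]
    have hXT : deriv (fun s => X s x) t = deriv X1 t * x + deriv X0f t := by
      have hfe : (fun s => X s x) = fun s => X1 s * x + X0f s := funext fun s => hlin s x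
      rw [hfe, deriv_fun_add (((hX1cd.differentiable (by simp)) t).mul_const x)
        ((hX0cd.differentiable (by simp)) t), deriv_mul_const ((hX1cd.differentiable (by simp)) t)]
    have hcan : U0 t x * deriv (X t) x / (U1 t * deriv T t) = U0 t x := by
      rw [hdel t x]
      simp only [hX1]
      exact mul_div_cancel_right₀ _ (mul_ne_zero (hU1ne t) (hT' t))
    rw [hsx, hXT, hcan, zero_div] at e
    linarith [e]
  have hV1 : ∀ t x : ℝ, deriv (fun y => U0 t y) x = deriv X1 t / deriv T t := by
    intro t x
    have hfe : (fun y => U0 t y) = fun y =>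
        (deriv X1 t / deriv T t) * y + deriv X0f t / deriv T t := by
      funext y; rw [hU0form t y]; ring
    rw [hfe]
    have h := ((hasDerivAt_id x).const_mul (deriv X1 t / deriv T t)).add_const
      (deriv X0f t / deriv T t)
    simpa using h.deriv
  have hWj : ∀ (t x : ℝ) (j : ℕ), 2 ≤ j → iteratedDeriv j (fun y => U0 t y) x = 0 := by
    intro t x j hj
    have hfe : (fun y => U0 t y) = fun y =>
        (deriv X1 t / deriv T t) * (y - 0)^1 + (0:ℝ) * y + deriv X0f t / deriv T t := by
      funext y; rw [hU0form t y]; ring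
    have h2 := itd_two j (show j ≠ 0 by omega) (deriv X1 t / deriv T t) 0
      (deriv X0f t / deriv T t) (f := fun y => (y - 0)^1) (g := fun y => y)
      ((contDiff_id.sub contDiff_const).pow 1) contDiff_id x
    rw [hfe, h2, itd_pow]
    simp [Nat.descFactorial_eq_zero_iff_lt.mpr (show 1 < j by omega)]
  have hcd1 : ContDiff ℝ (⊤ : ℕ∞) (fun s => deriv X1 s / deriv T s) :=
    (contDiff_omega_deriv hX1cd).div hdT hT'
  have hcd0 : ContDiff ℝ (⊤ : ℕ∞) (fun s => deriv X0f s / deriv T s) :=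
    (contDiff_omega_deriv hX0cd).div hdT hT'
  have hW' : ∀ t x : ℝ, deriv (fun s => U0 s x) t
      = deriv (fun s => deriv X1 s / deriv T s) t * x
        + deriv (fun s => deriv X0f s / deriv T s) t := by
    intro t x
    have hfe : (fun s => U0 s x) = fun s =>
        (deriv X1 s / deriv T s) * x + deriv X0f s / deriv T s := by
      funext s; rw [hU0form s x]; ring
    rw [hfe, deriv_fun_add (((hcd1.differentiable (by simp)) t).mul_const x)
      ((hcd0.differentiable (by simp)) t), deriv_mul_const ((hcd1.differentiable (by simp)) t)]
  have hdX1 : ∀ t, deriv X1 t = deriv U1 t * deriv T t + U1 t * deriv (deriv T) t := by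
    intro t
    rw [hX1]
    exact deriv_mul ((hU1.differentiable (by simp)) t) ((hdT.differentiable (by simp)) t)
  have heA : ∀ t x : ℝ, A0t (T t) (X t x)
      = A0 t x / deriv T t + deriv (fun y => U0 t y) x / (U1 t * deriv T t)
        + deriv U1 t / (U1 t * deriv T t) := by
    intro t x
    have h00 := master t x 0 0
    have h10 := master t x 1 0
    linear_combination h00 - h10
  have hA0tform : ∀ t x : ℝ, A0t (T t) (X t x)
      = (1 / deriv T t) * (A0 t x + 2 * deriv X1 t / X1 t
          - deriv (deriv T) t / deriv T t) := by
    intro t x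
    rw [heA t x, hV1 t x, hdX1 t, show X1 t = U1 t * deriv T t from by rw [hX1]]
    exact alg1 (A0 t x) (deriv T t) (U1 t) (deriv U1 t) (deriv (deriv T) t)
      (hT' t) (hU1ne t)
  have hBtform : ∀ t x : ℝ, Bt (T t) (X t x)
      = X1 t / (deriv T t)^2 * B t x
        + (1 / deriv T t) * deriv (fun s => deriv X1 s / deriv T s) t * x
        + (1 / deriv T t) * deriv (fun s => deriv X0f s / deriv T s) t
        - (deriv X1 t * x + deriv X0f t) / deriv T t * A0t (T t) (X t x) := by
    intro t x
    have h00 := master t x 0 0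
    have hsw : (∑ j ∈ Finset.Icc 2 r, A j t x * iteratedDeriv j (fun y => U0 t y) x) = 0 :=
      Finset.sum_eq_zero fun j hj => by
        rw [hWj t x j (Finset.mem_Icc.mp hj).1, mul_zero]
    rw [hsw, hV1 t x, hW' t x, hU0form t x] at h00
    have hB0 : Bt (T t) (X t x)
        = - A0 t x * ((deriv X1 t * x + deriv X0f t) / deriv T t) / deriv T t
          + U1 t * B t x / deriv T t
          - ((deriv X1 t * x + deriv X0f t) / deriv T t) * (deriv X1 t / deriv T t)
              / (U1 t * deriv T t)
          + (deriv (fun s => deriv X1 s / deriv T s) t * x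
              + deriv (fun s => deriv X0f s / deriv T s) t) / deriv T t
          - deriv U1 t * ((deriv X1 t * x + deriv X0f t) / deriv T t)
              / (U1 t * deriv T t) := by
      linear_combination -h00
    rw [heA t x, hV1 t x, hB0, show X1 t = U1 t * deriv T t from by rw [hX1]]
    exact alg2 (deriv T t) (U1 t) (deriv U1 t) (deriv X1 t) (deriv X0f t)
      (deriv (fun s => deriv X1 s / deriv T s) t) (deriv (fun s => deriv X0f s / deriv T s) t)
      (B t x) (A0 t x) x (hT' t) (hU1ne t)
  -- ## the monomial master identity
  have master2 : ∀ j ∈ Finset.Icc 2 r, ∀ (t0 x0 a : ℝ),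
      a * A j t0 x0 * (X1 t0)^j / deriv T t0
      - (∑ k ∈ Finset.Icc 2 r, A k t0 x0 * iteratedDeriv k (fun y => U0 t0 y) x0)
          / deriv T t0
      - A0 t0 x0 * U0 t0 x0 / deriv T t0
      + U1 t0 * B t0 x0 / deriv T t0
      - U0 t0 x0 * deriv (fun y => U0 t0 y) x0 / (U1 t0 * deriv T t0)
      + deriv (fun s => U0 s x0) t0 / deriv T t0
      - deriv U1 t0 * U0 t0 x0 / (U1 t0 * deriv T t0)
      = At j (T t0) (X t0 x0) * a + Bt (T t0) (X t0 x0) := by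
    intro j hj t0 x0 a
    have hj2 : 2 ≤ j := (Finset.mem_Icc.mp hj).1
    have hQ0 : U1 t0 ≠ 0 := hU1ne t0
    have hP0 : deriv T t0 ≠ 0 := hT' t0
    have hfact : ((j.factorial : ℝ)) ≠ 0 := Nat.cast_ne_zero.mpr (Nat.factorial_ne_zero j)
    set c : ℝ :=
      a * A j t0 x0 * (X1 t0)^j / deriv T t0
      - (∑ k ∈ Finset.Icc 2 r, A k t0 x0 * iteratedDeriv k (fun y => U0 t0 y) x0)
          / deriv T t0
      - A0 t0 x0 * U0 t0 x0 / deriv T t0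
      + U1 t0 * B t0 x0 / deriv T t0
      - U0 t0 x0 * deriv (fun y => U0 t0 y) x0 / (U1 t0 * deriv T t0)
      + deriv (fun s => U0 s x0) t0 / deriv T t0
      - deriv U1 t0 * U0 t0 x0 / (U1 t0 * deriv T t0) with hc
    set ut : ℝ → ℝ → ℝ :=
      fun s y => a / (j.factorial : ℝ) * (y - X t0 x0)^j + c * (s - T t0) with hut
    set u : ℝ → ℝ → ℝ := fun t x =>
      (a / (j.factorial : ℝ) * (X t x - X t0 x0)^j + c * (T t - T t0) - U0 t x) / U1 t with hu
    have hucd : ContDiff ℝ (⊤ : ℕ∞) (fun p : ℝ × ℝ => u p.1 p.2) := by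
      simp only [hu]
      exact (((contDiff_const.mul ((hX.sub contDiff_const).pow j)).add
        (contDiff_const.mul ((hT.comp contDiff_fst).sub contDiff_const))).sub hU0).div
        (hU1.comp contDiff_fst) (fun p => hU1ne p.1)
    have hutcd : ContDiff ℝ (⊤ : ℕ∞) (fun p : ℝ × ℝ => ut p.1 p.2) := by
      simp only [hut]
      exact (contDiff_const.mul ((contDiff_snd.sub contDiff_const).pow j)).add
        (contDiff_const.mul (contDiff_fst.sub contDiff_const))
    have hrel : ∀ t x : ℝ, ut (T t) (X t x) = U1 t * u t x + U0 t x := by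
      intro t x; simp only [hu, hut]; field_simp [hU1ne t]; ring
    have hXTd : HasDerivAt (fun s => X s x0) (deriv (fun s => X s x0) t0) t0 :=
      (((hXt x0).differentiable (by simp)) t0).hasDerivAt
    have hTd : HasDerivAt T (deriv T t0) t0 := ((hT.differentiable (by simp)) t0).hasDerivAt
    have hU0d : HasDerivAt (fun s => U0 s x0) (deriv (fun s => U0 s x0) t0) t0 :=
      (((hU0t x0).differentiable (by simp)) t0).hasDerivAt
    have hU1d : HasDerivAt U1 (deriv U1 t0) t0 := ((hU1.differentiable (by simp)) t0).hasDerivAt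
    have hpowd : HasDerivAt (fun s => (X s x0 - X t0 x0)^j)
        ((j:ℝ) * (X t0 x0 - X t0 x0)^(j-1) * deriv (fun s => X s x0) t0) t0 :=
      (hXTd.sub_const (X t0 x0)).pow j
    have hpowd0 : HasDerivAt (fun s => (X s x0 - X t0 x0)^j) 0 t0 := by
      have hz : (j:ℝ) * (X t0 x0 - X t0 x0)^(j-1) * deriv (fun s => X s x0) t0 = 0 := by
        rw [sub_self, zero_pow (show j - 1 ≠ 0 by omega)]; ring
      rwa [hz] at hpowd
    have hN : HasDerivAt
        (fun s => a / (j.factorial : ℝ) * (X s x0 - X t0 x0)^j + c * (T s - T t0) - U0 s x0)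
        (a / (j.factorial : ℝ) * 0 + c * deriv T t0 - deriv (fun s => U0 s x0) t0) t0 :=
      ((hpowd0.const_mul _).add ((hTd.sub_const (T t0)).const_mul c)).sub hU0d
    have hpdt : pdt u t0 x0 =
        ((a / (j.factorial : ℝ) * 0 + c * deriv T t0 - deriv (fun s => U0 s x0) t0) * U1 t0
          - (a / (j.factorial : ℝ) * (X t0 x0 - X t0 x0)^j + c * (T t0 - T t0) - U0 t0 x0)
              * deriv U1 t0) / U1 t0 ^ 2 := by
      simp only [pdt]
      exact (hN.div hU1d hQ0).deriv
    have hbase : ∀ x, X t0 x - X t0 x0 = X1 t0 * (x - x0) := by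
      intro x; rw [hlin t0 x, hlin t0 x0]; ring
    have hfun : (fun x => u t0 x) = fun x =>
        (a * (X1 t0)^j / ((j.factorial : ℝ) * U1 t0)) * (x - x0)^j
          + (-(1:ℝ) / U1 t0) * U0 t0 x + c * (T t0 - T t0) / U1 t0 := by
      funext x
      simp only [hu]
      rw [hbase x, mul_pow]
      field_simp
      ring
    have hpdxk : ∀ k, k ≠ 0 → pdx u k t0 x0 =
        (a * (X1 t0)^j / ((j.factorial : ℝ) * U1 t0)) * (if k = j then (j.factorial:ℝ) else 0)
          + (-(1:ℝ) / U1 t0) * iteratedDeriv k (fun y => U0 t0 y) x0 := by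
      intro k hk0
      simp only [pdx]
      have h2 := itd_two k hk0 (a * (X1 t0)^j / ((j.factorial : ℝ) * U1 t0)) (-(1:ℝ)/U1 t0)
        (c * (T t0 - T t0) / U1 t0) (f := fun y => (y - x0)^j) (g := fun y => U0 t0 y)
        ((contDiff_id.sub contDiff_const).pow j) (hU0s t0) x0
      have hh : u t0 = fun x => u t0 x := rfl
      rw [hh, hfun, h2, itd_pow_self]
    have hsum : ∑ k ∈ Finset.Icc 2 r, A k t0 x0 * pdx u k t0 x0
        = A j t0 x0 * (a * (X1 t0)^j / ((j.factorial : ℝ) * U1 t0)) * (j.factorial : ℝ)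
          - (1 / U1 t0) * (∑ k ∈ Finset.Icc 2 r,
              A k t0 x0 * iteratedDeriv k (fun y => U0 t0 y) x0) := by
      have step : ∀ k ∈ Finset.Icc 2 r, A k t0 x0 * pdx u k t0 x0
          = (if k = j then A k t0 x0 * (a * (X1 t0)^j / ((j.factorial : ℝ) * U1 t0))
              * (j.factorial : ℝ) else 0)
            - (1 / U1 t0) * (A k t0 x0 * iteratedDeriv k (fun y => U0 t0 y) x0) := by
        intro k hk
        rw [hpdxk k (by have := (Finset.mem_Icc.mp hk).1; omega)]
        split_ifs with h
        · subst h; ring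
        · ring
      rw [Finset.sum_congr rfl step, Finset.sum_sub_distrib,
        Finset.sum_ite_eq' (Finset.Icc 2 r) j, if_pos hj, ← Finset.mul_sum]
    have hpdx1 : pdx u 1 t0 x0 =
        (a * (X1 t0)^j / ((j.factorial : ℝ) * U1 t0)) * 0
          + (-(1:ℝ) / U1 t0) * deriv (fun y => U0 t0 y) x0 := by
      rw [hpdxk 1 one_ne_zero, if_neg (by omega), iteratedDeriv_one]
    have hE : pdt u t0 x0 + u t0 x0 * pdx u 1 t0 x0
        = ∑ k ∈ Finset.Icc 2 r, A k t0 x0 * pdx u k t0 x0 + A0 t0 x0 * u t0 x0 + B t0 x0 := by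
      rw [hpdt, hpdx1, hsum]
      simp only [hu]
      simp only [sub_self, zero_pow (show j ≠ 0 by omega)]
      rw [hc]
      field_simp
      ring
    have key := hmap u ut hucd hutcd hrel t0 x0 hE
    have hpdtut : pdt ut (T t0) (X t0 x0) = c := by
      simp only [pdt, hut]
      have h : HasDerivAt
          (fun s => a / (j.factorial : ℝ) * (X t0 x0 - X t0 x0)^j + c * (s - T t0)) c (T t0) := by
        have := (((hasDerivAt_id (T t0)).sub_const (T t0)).const_mul c).const_add
          (a / (j.factorial : ℝ) * (X t0 x0 - X t0 x0)^j)
        simpa using this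
      exact h.deriv
    have hutval : ut (T t0) (X t0 x0) = 0 := by
      simp [hut, sub_self, zero_pow (show j ≠ 0 by omega)]
    have hpdxutk : ∀ k, k ≠ 0 → pdx ut k (T t0) (X t0 x0)
        = (a / (j.factorial : ℝ)) * (if k = j then (j.factorial:ℝ) else 0) := by
      intro k hk
      simp only [pdx, hut]
      have hfn : (fun y => a / (j.factorial : ℝ) * (y - X t0 x0)^j + c * (T t0 - T t0))
          = fun y => (a / (j.factorial : ℝ)) * (y - X t0 x0)^j + (0:ℝ) * y
              + c * (T t0 - T t0) := by
        funext y; ring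
      have h2 := itd_two k hk (a / (j.factorial : ℝ)) 0 (c * (T t0 - T t0))
        (f := fun y => (y - X t0 x0)^j) (g := fun y => y)
        ((contDiff_id.sub contDiff_const).pow j) contDiff_id (X t0 x0)
      rw [hfn, h2, itd_pow_self]
      ring
    have hpdxut1 : pdx ut 1 (T t0) (X t0 x0) = 0 := by
      rw [hpdxutk 1 one_ne_zero, if_neg (by omega), mul_zero]
    have hsumut : ∑ k ∈ Finset.Icc 2 r, At k (T t0) (X t0 x0) * pdx ut k (T t0) (X t0 x0)
        = At j (T t0) (X t0 x0) * a := by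
      have step : ∀ k ∈ Finset.Icc 2 r, At k (T t0) (X t0 x0) * pdx ut k (T t0) (X t0 x0)
          = (if k = j then At k (T t0) (X t0 x0) * a else 0) := by
        intro k hk
        rw [hpdxutk k (by have := (Finset.mem_Icc.mp hk).1; omega)]
        split_ifs with h
        · subst h; field_simp
        · ring
      rw [Finset.sum_congr rfl step, Finset.sum_ite_eq' (Finset.Icc 2 r) j, if_pos hj]
    rw [hpdtut, hutval, hpdxut1, hsumut, mul_zero, add_zero, mul_zero, add_zero] at key
    exact key
  -- ## assemble the conclusion
  refine ⟨hDD, X1, X0f, hX1cd, hX0cd, hX1ne, hlin, ?_, hU0form, ?_, ?_, ?_⟩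
  · intro t
    rw [hX1, mul_div_assoc, div_self (hT' t), mul_one]
  · intro j hj t x
    rw [← hlin t x]
    have h1 := master2 j hj t x 1
    have h0 := master t x 0 0
    linear_combination h0 - h1
  · intro t x
    rw [← hlin t x]
    exact hA0tform t x
  · intro t x
    rw [← hlin t x]
    exact hBtform t x
end

section
/- The usual equivalence group of the class F of reduced Burgers–KdV equations with space-dependent coefficients acts as follows. Let r ≥ 2, let c₁, c₃ be nonzero reals and c₂, c₄ reals, and let A², …, A^r, A⁰, B : ℝ → ℝ be smooth with A^r nowhere zero. If u solves u_t + u u_x = Σ_{j=2}^r A^j(x) u_j + A⁰(x) u + B(x) on ℝ², then the function ũ defined by ũ(t̃, x̃) = (c₃/c₁)·u((t̃ − c₂)/c₁, (x̃ − c₄)/c₃) solves ũ_t + ũ ũ_x = Σ_{j=2}^r Ã^j(x̃) ũ_j + Ã⁰(x̃) ũ + B̃(x̃) on ℝ², where Ã^j(x̃) = (c₃^j/c₁)·A^j((x̃−c₄)/c₃), Ã⁰(x̃) = A⁰((x̃−c₄)/c₃)/c₁, and B̃(x̃) = (c₃/c₁²)·B((x̃−c₄)/c₃). -/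
open Real Set

private lemma itd_cmul {f : ℝ → ℝ} (hf : ContDiff ℝ (⊤ : ℕ∞) f) (c : ℝ) (n : ℕ) (x : ℝ) :
    iteratedDeriv n (fun z => c * f z) x = c * iteratedDeriv n f x := by
  rw [← iteratedDerivWithin_univ, ← iteratedDerivWithin_univ]
  exact iteratedDerivWithin_const_mul (Set.mem_univ x) uniqueDiffOn_univ c
    (hf.of_le (by exact_mod_cast le_top)).contDiffWithinAt

private lemma itd_affine {f : ℝ → ℝ} (hf : ContDiff ℝ (⊤ : ℕ∞) f) (a b : ℝ) (n : ℕ) (x : ℝ) :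
    iteratedDeriv n (fun z => f (a * z + b)) x = a ^ n * iteratedDeriv n f (a * x + b) := by
  have hg : ContDiff ℝ (⊤ : ℕ∞) (fun y => f (y + b)) := hf.comp (contDiff_id.add contDiff_const)
  have h1 := iteratedDeriv_comp_const_mul (n := n) (f := fun y => f (y + b)) (hg.of_le (by exact_mod_cast le_top)) a
  have h2 := iteratedDeriv_comp_add_const n f b
  calc iteratedDeriv n (fun z => f (a * z + b)) x
      = iteratedDeriv n (fun z => (fun y => f (y + b)) (a * z)) x := rfl
    _ = a ^ n * iteratedDeriv n (fun y => f (y + b)) (a * x) := by rw [h1]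
    _ = a ^ n * iteratedDeriv n f (a * x + b) := by rw [h2]

theorem stmt3 (r : ℕ) (hr : 2 ≤ r)
    (c1 c2 c3 c4 : ℝ) (hc1 : c1 ≠ 0) (hc3 : c3 ≠ 0)
    (A : ℕ → ℝ → ℝ) (A0 B : ℝ → ℝ)
    (hA : ∀ j ∈ Finset.Icc 2 r, ContDiff ℝ (⊤ : ℕ∞) (A j))
    (hA0 : ContDiff ℝ (⊤ : ℕ∞) A0) (hB : ContDiff ℝ (⊤ : ℕ∞) B)
    (hAr : ∀ x : ℝ, A r x ≠ 0)
    (u : ℝ → ℝ → ℝ) (hu : ContDiff ℝ (⊤ : ℕ∞) (fun p : ℝ × ℝ => u p.1 p.2))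
    (hueq : ∀ t x : ℝ,
      pdt u t x + u t x * pdx u 1 t x
        = ∑ j ∈ Finset.Icc 2 r, A j x * pdx u j t x + A0 x * u t x + B x)
    (ut : ℝ → ℝ → ℝ)
    (hutdef : ∀ tt xt : ℝ,
      ut tt xt = c3 / c1 * u ((tt - c2) / c1) ((xt - c4) / c3)) :
    ContDiff ℝ (⊤ : ℕ∞) (fun p : ℝ × ℝ => ut p.1 p.2) ∧
    ∀ tt xt : ℝ,
      pdt ut tt xt + ut tt xt * pdx ut 1 tt xt
        = ∑ j ∈ Finset.Icc 2 r,
            (c3 ^ j / c1 * A j ((xt - c4) / c3)) * pdx ut j tt xt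
          + A0 ((xt - c4) / c3) / c1 * ut tt xt
          + c3 / c1 ^ 2 * B ((xt - c4) / c3) := by
  have haff : ContDiff ℝ (⊤ : ℕ∞) (fun p : ℝ × ℝ => ((p.1 - c2) / c1, (p.2 - c4) / c3)) :=
    ((contDiff_fst.sub contDiff_const).div_const c1).prodMk
      ((contDiff_snd.sub contDiff_const).div_const c3)
  have hutc : ContDiff ℝ (⊤ : ℕ∞) (fun p : ℝ × ℝ => ut p.1 p.2) := by
    have h : (fun p : ℝ × ℝ => ut p.1 p.2)
        = fun p : ℝ × ℝ => c3 / c1 * u ((p.1 - c2) / c1) ((p.2 - c4) / c3) :=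
      funext fun p => hutdef p.1 p.2
    rw [h]
    exact contDiff_const.mul (hu.comp haff)
  refine ⟨hutc, fun tt xt => ?_⟩
  set T : ℝ := (tt - c2) / c1 with hT
  set X : ℝ := (xt - c4) / c3 with hX
  -- spatial derivatives
  have hfX : ContDiff ℝ (⊤ : ℕ∞) (u T) := hu.comp (contDiff_const.prodMk contDiff_id)
  have hfun : ut tt = fun x => c3 / c1 * u T ((1 / c3) * x + (-(c4 / c3))) := by
    funext x
    rw [hutdef tt x]
    congr 2
    ring
  have hpdx : ∀ j : ℕ, pdx ut j tt xt = c3 / c1 * ((1 / c3) ^ j * pdx u j T X) := by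
    intro j
    have hin : ContDiff ℝ (⊤ : ℕ∞) (fun x : ℝ => u T ((1 / c3) * x + (-(c4 / c3)))) :=
      hfX.comp ((contDiff_const.mul contDiff_id).add contDiff_const)
    have h1 : pdx ut j tt xt
        = iteratedDeriv j (fun x => c3 / c1 * u T ((1 / c3) * x + (-(c4 / c3)))) xt := by
      rw [pdx, hfun]
    rw [h1, itd_cmul hin, itd_affine hfX,
      show (1 / c3) * xt + (-(c4 / c3)) = X by rw [hX]; field_simp; ring]
    rfl
  -- time derivative
  have hg : ContDiff ℝ (⊤ : ℕ∞) (fun s : ℝ => u s X) := hu.comp (contDiff_id.prodMk contDiff_const)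
  have hgd : HasDerivAt (fun s : ℝ => u s X) (pdt u T X) T :=
    ((hg.differentiable (by simp)) T).hasDerivAt
  have hinner : HasDerivAt (fun s : ℝ => (s - c2) / c1) (1 / c1) tt := by
    simpa using ((hasDerivAt_id tt).sub_const c2).div_const c1
  have hcomp : HasDerivAt (fun s : ℝ => u ((s - c2) / c1) X) (pdt u T X * (1 / c1)) tt :=
    by have := HasDerivAt.comp tt hgd hinner; exact this
  have hpdt : pdt ut tt xt = c3 / c1 * (pdt u T X * (1 / c1)) := by
    have h : (fun s : ℝ => ut s xt) = fun s : ℝ => c3 / c1 * u ((s - c2) / c1) X :=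
      funext fun s => hutdef s xt
    rw [pdt, h]
    exact (hcomp.const_mul (c3 / c1)).deriv
  -- transformed sum
  have hsum : ∑ j ∈ Finset.Icc 2 r, (c3 ^ j / c1 * A j X) * pdx ut j tt xt
      = c3 / c1 ^ 2 * ∑ j ∈ Finset.Icc 2 r, A j X * pdx u j T X := by
    rw [Finset.mul_sum]
    refine Finset.sum_congr rfl fun j hj => ?_
    rw [hpdx j]
    field_simp
    rw [show c3 ^ j * A j X * (1 / c3) ^ j = A j X by
      rw [mul_comm (c3 ^ j), mul_assoc, ← mul_pow, mul_one_div_cancel hc3, one_pow, mul_one]]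
  have E := hueq T X
  have hpdx1 : pdx ut 1 tt xt = 1 / c1 * pdx u 1 T X := by
    rw [hpdx 1]; field_simp
  rw [hpdt, hpdx1, hsum, hutdef tt xt, ← hT, ← hX]
  linear_combination (c3 / c1 ^ 2) * E
end

section
/- Conditional equivalence transformations of the subclass F_{I,1}: let r ≥ 2, α ≠ 0 real, a₂, …, a_r real with a_r ≠ 0, a₀₁ ≠ 0, b₁, b₂ real, and let c₄, c₅ be reals with c₄ ≠ 0. Let I ⊆ ℝ be an open interval and T smooth on I with c₄T′(t) > 0 for all t ∈ I and satisfying the ODE T″/T′ = −α(b₁ − (c₅/c₄)T′)/a₀₁ on I. Set X¹(t) = (c₄T′(t))^{−1/α} (> 0). If u solves u_t + u u_x = Σ_{j=2}^r a_j x^{j+α} u_j + (a₀₁ x^α − (α+2)b₁/a₀₁) u + x(b₂ x^{2α} + b₁ x^α − (α+1)b₁²/a₀₁²) on I × (0,∞), then the transformed function ũ of u under (T, X¹, 0), i.e. ũ(T(t), X¹(t)x) = (X¹/T′)u(t,x) + (X¹′/T′)x, solves the equation of the same form with parameters ã_j = c₄a_j, ã₀₁ = c₄a₀₁, b̃₁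 = c₅, b̃₂ = c₄²b₂, namely ũ_t + ũ ũ_x = Σ_{j=2}^r c₄a_j x̃^{j+α} ũ_j + (c₄a₀₁ x̃^α − (α+2)c₅/(c₄a₀₁)) ũ + x̃(c₄²b₂ x̃^{2α} + c₅ x̃^α − (α+1)c₅²/(c₄a₀₁)²) on T(I) × (0,∞). -/
open Real Set

lemma contDiffOn_iteratedDeriv' {f : ℝ → ℝ} {s : Set ℝ} (hs : IsOpen s)
    (hf : ContDiffOn ℝ (⊤ : ℕ∞) f s) : ∀ j, ContDiffOn ℝ (⊤ : ℕ∞) (iteratedDeriv j f) s := by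
  intro j; induction j with
  | zero => rwa [iteratedDeriv_zero]
  | succ n ih => rw [iteratedDeriv_succ]; exact ih.deriv_of_isOpen hs (by simp)

lemma deriv_scale_aux {f G : ℝ → ℝ} {X k c1 c0 : ℝ} (hX : 0 < X)
    (hf : ContDiffOn ℝ (⊤ : ℕ∞) f (Ioi 0))
    (hG : ∀ y ∈ Ioi (0:ℝ), G y = k * f (y / X) + (c1 * y + c0)) :
    ∀ y ∈ Ioi (0:ℝ), deriv G y = k / X * deriv f (y / X) + c1 := by
  intro y hy
  have hyX : y / X ∈ Ioi (0:ℝ) := div_pos hy hX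
  have hdf : DifferentiableAt ℝ f (y / X) :=
    (hf.contDiffAt (isOpen_Ioi.mem_nhds hyX)).differentiableAt (by simp)
  have hdiv : HasDerivAt (fun z : ℝ => z / X) (1 / X) y := by
    simpa using (hasDerivAt_id y).div_const X
  have h1 : HasDerivAt (fun z => k * f (z / X) + (c1 * z + c0))
      (k / X * deriv f (y / X) + c1) y := by
    have h2 := ((hdf.hasDerivAt.comp y hdiv).const_mul k).add
      (((hasDerivAt_id y).const_mul c1).add_const c0)
    refine h2.congr_deriv (Eq.symm ?_)
    ring
  have hev : G =ᶠ[nhds y] fun z => k * f (z / X) + (c1 * z + c0) :=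
    Filter.eventuallyEq_of_mem (isOpen_Ioi.mem_nhds hy) hG
  rw [hev.deriv_eq]
  exact h1.deriv

lemma scale_iteratedDeriv {f F : ℝ → ℝ} {X A C : ℝ} (hX : 0 < X)
    (hf : ContDiffOn ℝ (⊤ : ℕ∞) f (Ioi 0))
    (hFeq : ∀ y ∈ Ioi (0:ℝ), F y = A * f (y / X) + C * y) :
    ∀ j, 1 ≤ j → ∀ y ∈ Ioi (0:ℝ),
      iteratedDeriv j F y
        = A / X ^ j * iteratedDeriv j f (y / X) + (if j = 1 then C else 0) := by
  intro j
  induction j with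
  | zero => intro h; omega
  | succ n ih =>
    intro _ y hy
    rcases Nat.eq_zero_or_pos n with hn | hn
    · subst hn
      have haux := deriv_scale_aux (G := F) (k := A) (c1 := C) (c0 := 0) hX hf
        (by intro z hz; rw [hFeq z hz]; ring)
      have := haux y hy
      simp only [iteratedDeriv_one, iteratedDeriv_succ, iteratedDeriv_zero, pow_one, if_pos rfl]
      simpa using this
    · have hfs := contDiffOn_iteratedDeriv' isOpen_Ioi hf n
      have haux := deriv_scale_aux (G := iteratedDeriv n F) (k := A / X ^ n)
        (c1 := 0) (c0 := if n = 1 then C else 0) hX hfs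
        (by intro z hz; rw [ih (by omega) z hz]; ring)
      have h := haux y hy
      rw [iteratedDeriv_succ, h, ← iteratedDeriv_succ, if_neg (by omega)]
      rw [pow_succ]
      ring

set_option maxHeartbeats 3000000 in
theorem stmt5 (r : ℕ) (hr : 2 ≤ r)
    (α : ℝ) (hα : α ≠ 0)
    (a : ℕ → ℝ) (har : a r ≠ 0) (a01 : ℝ) (ha01 : a01 ≠ 0)
    (b1 b2 c4 c5 : ℝ) (hc4 : c4 ≠ 0)
    (I : Set ℝ) (hIo : IsOpen I) (hIc : I.OrdConnected)
    (T : ℝ → ℝ) (hT : ContDiffOn ℝ (⊤ : ℕ∞) T I)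
    (hT' : ∀ t ∈ I, 0 < c4 * deriv T t)
    (hTode : ∀ t ∈ I,
      deriv (deriv T) t / deriv T t = -α * (b1 - c5 / c4 * deriv T t) / a01)
    (X1 : ℝ → ℝ) (hX1def : ∀ t ∈ I, X1 t = (c4 * deriv T t) ^ (-(1 / α)))
    (u : ℝ → ℝ → ℝ)
    (hu : ContDiffOn ℝ (⊤ : ℕ∞) (fun p : ℝ × ℝ => u p.1 p.2) (I ×ˢ Ioi (0 : ℝ)))
    (hueq : ∀ t ∈ I, ∀ x ∈ Ioi (0 : ℝ),
      pdt u t x + u t x * pdx u 1 t x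
        = ∑ j ∈ Finset.Icc 2 r, a j * x ^ ((j : ℝ) + α) * pdx u j t x
          + (a01 * x ^ α - (α + 2) * b1 / a01) * u t x
          + x * (b2 * x ^ (2 * α) + b1 * x ^ α - (α + 1) * b1 ^ 2 / a01 ^ 2))
    (ut : ℝ → ℝ → ℝ)
    (hut : ContDiffOn ℝ (⊤ : ℕ∞) (fun p : ℝ × ℝ => ut p.1 p.2) ((T '' I) ×ˢ Ioi (0 : ℝ)))
    (hutdef : ∀ t ∈ I, ∀ x ∈ Ioi (0 : ℝ),
      ut (T t) (X1 t * x)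
        = X1 t / deriv T t * u t x + deriv X1 t / deriv T t * x) :
    ∀ tt ∈ T '' I, ∀ xt ∈ Ioi (0 : ℝ),
      pdt ut tt xt + ut tt xt * pdx ut 1 tt xt
        = ∑ j ∈ Finset.Icc 2 r, c4 * a j * xt ^ ((j : ℝ) + α) * pdx ut j tt xt
          + (c4 * a01 * xt ^ α - (α + 2) * c5 / (c4 * a01)) * ut tt xt
          + xt * (c4 ^ 2 * b2 * xt ^ (2 * α) + c5 * xt ^ α
              - (α + 1) * c5 ^ 2 / (c4 * a01) ^ 2) := by
  -- basic nonvanishing facts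
  have hDne : ∀ t ∈ I, deriv T t ≠ 0 := by
    intro t ht h
    have := hT' t ht
    rw [h, mul_zero] at this
    exact lt_irrefl 0 this
  have hX1pos : ∀ t ∈ I, 0 < X1 t := by
    intro t ht
    rw [hX1def t ht]
    exact Real.rpow_pos_of_pos (hT' t ht) _
  have hTC : ContDiffOn ℝ (⊤ : ℕ∞) (deriv T) I := hT.deriv_of_isOpen hIo (by simp)
  have hDTd : ∀ t ∈ I, HasDerivAt (deriv T) (deriv (deriv T) t) t := fun t ht =>
    ((hTC.contDiffAt (hIo.mem_nhds ht)).differentiableAt (by simp)).hasDerivAt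
  have hD2 : ∀ t ∈ I, deriv (deriv T) t
      = deriv T t * (-α * (b1 - c5 / c4 * deriv T t) / a01) := by
    intro t ht
    have h := hTode t ht
    rw [div_eq_iff (hDne t ht)] at h
    rw [h]; ring
  -- derivative of X1
  have hX1d : ∀ t ∈ I, HasDerivAt X1 (X1 t * (b1 - c5 / c4 * deriv T t) / a01) t := by
    intro t ht
    have hP : (0:ℝ) < c4 * deriv T t := hT' t ht
    have hPd : HasDerivAt (fun s => c4 * deriv T s) (c4 * deriv (deriv T) t) t :=
      (hDTd t ht).const_mul c4
    have h1 : HasDerivAt (fun s => (c4 * deriv T s) ^ (-(1/α)))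
        ((c4 * deriv (deriv T) t) * (-(1/α)) * (c4 * deriv T t) ^ (-(1/α) - 1)) t :=
      hPd.rpow_const (Or.inl (ne_of_gt hP))
    have hev : X1 =ᶠ[nhds t] (fun s => (c4 * deriv T s) ^ (-(1/α))) :=
      Filter.eventuallyEq_of_mem (hIo.mem_nhds ht) (fun s hs => hX1def s hs)
    have h2 := h1.congr_of_eventuallyEq hev
    refine h2.congr_deriv (Eq.symm ?_)
    rw [hX1def t ht, hD2 t ht]
    rw [show -(1/α) - 1 = -(1/α) + (-1) by ring, Real.rpow_add hP, Real.rpow_neg_one]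
    field_simp [hDne t ht]
  -- openness of T '' I
  have hTI : IsOpen (T '' I) := by
    rw [isOpen_iff_mem_nhds]
    rintro _ ⟨t0, ht0, rfl⟩
    have hct : ContDiffAt ℝ (⊤ : ℕ∞) T t0 := hT.contDiffAt (hIo.mem_nhds ht0)
    have hsd : HasStrictDerivAt T (deriv T t0) t0 := hct.hasStrictDerivAt (by simp)
    have hmap := hsd.map_nhds_eq (hDne t0 ht0)
    rw [← hmap]
    exact Filter.image_mem_map (hIo.mem_nhds ht0)
  intro tt htt xt hxt
  obtain ⟨t0, ht0, rfl⟩ := htt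
  have hxtpos : (0:ℝ) < xt := hxt
  have hDne0 : deriv T t0 ≠ 0 := hDne t0 ht0
  have hXpos : 0 < X1 t0 := hX1pos t0 ht0
  have hXne : X1 t0 ≠ 0 := ne_of_gt hXpos
  set x0 := xt / X1 t0 with hx0def
  have hx0pos : 0 < x0 := div_pos hxtpos hXpos
  have hxt' : X1 t0 * x0 = xt := by rw [hx0def]; field_simp
  have hderivX1 : deriv X1 t0 = X1 t0 * (b1 - c5 / c4 * deriv T t0) / a01 :=
    (hX1d t0 ht0).deriv

  -- value of ut along the scaled fiber
  have hut0 : ∀ x ∈ Ioi (0:ℝ), ut (T t0) (X1 t0 * x)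
      = X1 t0 / deriv T t0 * u t0 x
        + X1 t0 * (b1 - c5 / c4 * deriv T t0) / (a01 * deriv T t0) * x := by
    intro x hx
    rw [hutdef t0 ht0 x hx, hderivX1]
    ring
  have hF : ∀ y ∈ Ioi (0:ℝ), ut (T t0) y
      = X1 t0 / deriv T t0 * u t0 (y / X1 t0)
        + X1 t0 * (b1 - c5 / c4 * deriv T t0) / (a01 * deriv T t0) / X1 t0 * y := by
    intro y hy
    have hyX : y / X1 t0 ∈ Ioi (0:ℝ) := div_pos hy hXpos
    have h := hut0 (y / X1 t0) hyX
    rw [show X1 t0 * (y / X1 t0) = y from by field_simp] at h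
    rw [h]
    ring
  have hslice : ContDiffOn ℝ (⊤ : ℕ∞) (u t0) (Ioi 0) := by
    have heq : (u t0) = (fun p : ℝ × ℝ => u p.1 p.2) ∘ (fun x => (t0, x)) := rfl
    rw [heq]
    exact hu.comp ((contDiff_const.prodMk contDiff_id).contDiffOn)
      (fun x hx => Set.mem_prod.mpr ⟨ht0, hx⟩)
  have hsp := scale_iteratedDeriv (F := ut (T t0)) hXpos hslice hF
  have hpdx1ut : pdx ut 1 (T t0) xt
      = X1 t0 / deriv T t0 / X1 t0 * pdx u 1 t0 x0
        + X1 t0 * (b1 - c5 / c4 * deriv T t0) / (a01 * deriv T t0) / X1 t0 := by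
    have h := hsp 1 le_rfl xt hxt
    rw [if_pos rfl, pow_one] at h
    rw [hx0def]
    exact h
  have hpdxjut : ∀ j ∈ Finset.Icc 2 r, pdx ut j (T t0) xt
      = X1 t0 / deriv T t0 / X1 t0 ^ j * pdx u j t0 x0 := by
    intro j hj
    have h2j : 2 ≤ j := (Finset.mem_Icc.mp hj).1
    have h := hsp j (by omega) xt hxt
    rw [if_neg (by omega), add_zero] at h
    rw [hx0def]
    exact h
  have hXa : X1 t0 ^ α = (c4 * deriv T t0)⁻¹ := by
    rw [hX1def t0 ht0, ← Real.rpow_mul (le_of_lt (hT' t0 ht0)),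
      show -(1/α) * α = -1 from by field_simp]
    exact Real.rpow_neg_one _
  have hxta : xt ^ α = (c4 * deriv T t0)⁻¹ * x0 ^ α := by
    rw [← hxt', Real.mul_rpow (le_of_lt hXpos) (le_of_lt hx0pos), hXa]
  have hsumterm : ∀ j ∈ Finset.Icc 2 r,
      c4 * a j * xt ^ ((j:ℝ) + α) * pdx ut j (T t0) xt
        = X1 t0 / deriv T t0 / deriv T t0 * (a j * x0 ^ ((j:ℝ) + α) * pdx u j t0 x0) := by
    intro j hj
    rw [hpdxjut j hj, ← hxt',
        Real.mul_rpow (le_of_lt hXpos) (le_of_lt hx0pos),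
        Real.rpow_add hXpos, Real.rpow_natCast, hXa]
    have hXjne : X1 t0 ^ j ≠ 0 := pow_ne_zero _ hXne
    field_simp
  -- fderiv of u at (t0, x0)
  have hopen : IsOpen (I ×ˢ Ioi (0:ℝ)) := hIo.prod isOpen_Ioi
  have hmem : (t0, x0) ∈ I ×ˢ Ioi (0:ℝ) := Set.mem_prod.mpr ⟨ht0, hx0pos⟩
  have hudiff : DifferentiableAt ℝ (fun p : ℝ × ℝ => u p.1 p.2) (t0, x0) :=
    (hu.contDiffAt (hopen.mem_nhds hmem)).differentiableAt (by simp)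
  have hLf : HasFDerivAt (fun p : ℝ × ℝ => u p.1 p.2)
      (fderiv ℝ (fun p : ℝ × ℝ => u p.1 p.2) (t0, x0)) (t0, x0) := hudiff.hasFDerivAt
  set L := fderiv ℝ (fun p : ℝ × ℝ => u p.1 p.2) (t0, x0) with hLdef
  have hsliceT : HasDerivAt (fun s => u s x0) (L (1, 0)) t0 :=
    by have := hLf.comp_hasDerivAt t0 ((hasDerivAt_id t0).prodMk (hasDerivAt_const t0 x0)); exact this
  have hpdtu : pdt u t0 x0 = L (1, 0) := hsliceT.deriv
  have hsliceX : HasDerivAt (u t0) (L (0, 1)) x0 :=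
    by have := hLf.comp_hasDerivAt x0 ((hasDerivAt_const x0 t0).prodMk (hasDerivAt_id x0)); exact this
  have hpdx1u : pdx u 1 t0 x0 = L (0, 1) := by
    show iteratedDeriv 1 (u t0) x0 = L (0, 1)
    rw [iteratedDeriv_one]
    exact hsliceX.deriv
  -- x-path derivative
  have hxfd : HasDerivAt (fun t => xt / X1 t)
      (-(x0 * (b1 - c5 / c4 * deriv T t0) / a01)) t0 := by
    have h := (hasDerivAt_const t0 xt).div (hX1d t0 ht0) hXne
    refine h.congr_deriv (Eq.symm ?_)
    rw [hx0def]
    field_simp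
    ring
  have hxpath : HasDerivAt (fun t : ℝ => ((t : ℝ), xt / X1 t))
      ((1:ℝ), -(x0 * (b1 - c5 / c4 * deriv T t0) / a01)) t0 :=
    (hasDerivAt_id t0).prodMk hxfd
  have hupath : HasDerivAt (fun t => u t (xt / X1 t))
      (L (1, 0) + -(x0 * (b1 - c5 / c4 * deriv T t0) / a01) * L (0, 1)) t0 := by
    have h := hLf.comp_hasDerivAt t0 hxpath
    refine h.congr_deriv (Eq.symm ?_)
    have hsplit : ((1:ℝ), -(x0 * (b1 - c5 / c4 * deriv T t0) / a01))
        = ((1:ℝ), (0:ℝ)) + (-(x0 * (b1 - c5 / c4 * deriv T t0) / a01)) • ((0:ℝ), (1:ℝ)) := by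
      simp [Prod.ext_iff]
    rw [hsplit, map_add, map_smul, smul_eq_mul]
  -- ut slice and composition
  have hmem2 : (T t0, xt) ∈ (T '' I) ×ˢ Ioi (0:ℝ) :=
    Set.mem_prod.mpr ⟨⟨t0, ht0, rfl⟩, hxt⟩
  have hutdiff : DifferentiableAt ℝ (fun p : ℝ × ℝ => ut p.1 p.2) (T t0, xt) :=
    (hut.contDiffAt ((hTI.prod isOpen_Ioi).mem_nhds hmem2)).differentiableAt (by simp)
  have hLtf : HasFDerivAt (fun p : ℝ × ℝ => ut p.1 p.2)
      (fderiv ℝ (fun p : ℝ × ℝ => ut p.1 p.2) (T t0, xt)) (T t0, xt) := hutdiff.hasFDerivAt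
  set Lt := fderiv ℝ (fun p : ℝ × ℝ => ut p.1 p.2) (T t0, xt) with hLtdef
  have hsliceUt : HasDerivAt (fun s => ut s xt) (Lt (1, 0)) (T t0) :=
    by have := hLtf.comp_hasDerivAt (T t0) ((hasDerivAt_id (T t0)).prodMk (hasDerivAt_const (T t0) xt)); exact this
  have hpdtut : pdt ut (T t0) xt = Lt (1, 0) := hsliceUt.deriv
  have hTd0 : HasDerivAt T (deriv T t0) t0 :=
    ((hT.contDiffAt (hIo.mem_nhds ht0)).differentiableAt (by simp)).hasDerivAt
  have hcomp : HasDerivAt (fun t => ut (T t) xt) (Lt (1, 0) * deriv T t0) t0 :=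
    hsliceUt.comp t0 hTd0
  -- equality of the two time paths on I
  have hpatheq : ∀ t ∈ I, ut (T t) xt
      = X1 t / deriv T t * u t (xt / X1 t)
        + X1 t * (b1 - c5 / c4 * deriv T t) / (a01 * deriv T t) * (xt / X1 t) := by
    intro t ht
    have hx : xt / X1 t ∈ Ioi (0:ℝ) := div_pos hxtpos (hX1pos t ht)
    have h := hutdef t ht _ hx
    rw [show X1 t * (xt / X1 t) = xt from by
      field_simp [ne_of_gt (hX1pos t ht)]] at h
    rw [h, (hX1d t ht).deriv]
    ring
  -- derivatives of the coefficient functions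
  have hAd : HasDerivAt (fun t => X1 t / deriv T t)
      ((α + 1) * (X1 t0 * (b1 - c5 / c4 * deriv T t0) / (a01 * deriv T t0))) t0 := by
    have h := (hX1d t0 ht0).div (hDTd t0 ht0) hDne0
    refine h.congr_deriv (Eq.symm ?_)
    rw [hD2 t0 ht0]
    field_simp
    ring
  have hKd : HasDerivAt (fun t => b1 - c5 / c4 * deriv T t)
      (0 - c5 / c4 * deriv (deriv T) t0) t0 :=
    (hasDerivAt_const t0 b1).sub ((hDTd t0 ht0).const_mul (c5 / c4))
  have hBd : HasDerivAt (fun t => X1 t * (b1 - c5 / c4 * deriv T t) / (a01 * deriv T t))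
      ((α + 1) * (X1 t0 * (b1 - c5 / c4 * deriv T t0) / (a01 * deriv T t0)) ^ 2
          * (deriv T t0 / X1 t0)
        + α * (c5 / c4) * (X1 t0 * (b1 - c5 / c4 * deriv T t0) / (a01 * deriv T t0))
          * deriv T t0 / a01) t0 := by
    have h := ((hX1d t0 ht0).mul hKd).div ((hDTd t0 ht0).const_mul a01)
      (mul_ne_zero ha01 hDne0)
    refine h.congr_deriv (Eq.symm ?_)
    rw [hD2 t0 ht0]
    simp only [Pi.mul_apply]
    field_simp
    ring
  have hG := (hAd.mul hupath).add (hBd.mul hxfd)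
  have hev2 : (fun t => ut (T t) xt) =ᶠ[nhds t0]
      (fun t => X1 t / deriv T t * u t (xt / X1 t)
        + X1 t * (b1 - c5 / c4 * deriv T t) / (a01 * deriv T t) * (xt / X1 t)) :=
    Filter.eventuallyEq_of_mem (hIo.mem_nhds ht0) hpatheq
  have hcomp' := hcomp.congr_of_eventuallyEq hev2.symm
  have hkey := hcomp'.unique hG
  rw [← hx0def] at hkey
  have hLt' : Lt (1, 0) = _ / deriv T t0 := (eq_div_iff hDne0).mpr hkey
  -- the PDE for u at (t0, x0)
  have hueq0 := hueq t0 ht0 x0 hx0pos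
  rw [hpdtu, hpdx1u] at hueq0
  have hS : (∑ j ∈ Finset.Icc 2 r, a j * x0 ^ ((j:ℝ) + α) * pdx u j t0 x0)
      = L (1, 0) + u t0 x0 * L (0, 1)
        - (a01 * x0 ^ α - (α + 2) * b1 / a01) * u t0 x0
        - x0 * (b2 * x0 ^ (2 * α) + b1 * x0 ^ α - (α + 1) * b1 ^ 2 / a01 ^ 2) := by
    linarith [hueq0]
  have hutval : ut (T t0) xt
      = X1 t0 / deriv T t0 * u t0 x0
        + X1 t0 * (b1 - c5 / c4 * deriv T t0) / (a01 * deriv T t0) * x0 := by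
    rw [← hxt']
    exact hut0 x0 hx0pos
  rw [hpdtut, hLt', hpdx1ut, hpdx1u, hutval,
    Finset.sum_congr rfl hsumterm, ← Finset.mul_sum, hS]
  simp only [show (2:ℝ) * α = α + α from two_mul α, Real.rpow_add hxtpos,
    Real.rpow_add hx0pos, hxta]
  rw [← hxt']
  field_simp [hDne0, hXne, ha01, hc4]
  ring
end

section
/- Conditional equivalence transformations of the subclass F_{I,01}: let r ≥ 2, α a real number with α ≠ 0 and α ≠ −2, a₂, …, a_r real with a_r ≠ 0, a₀₀, b₂ real, and let c₄ ≠ 0 and c₅ be reals. Let I ⊆ ℝ be an open interval and T smooth on I with c₄T′(t) > 0 for all t ∈ I and satisfying the ODE a₀₀ − ((α+2)/α)·(T″/T′) = c₅T′ on I. Set X¹(t) = (c₄T′(t))^{−1/α}. If u solves u_t + u u_x = Σ_{j=2}^r a_j x^{j+α} u_j + a₀₀ u + x(b₂ x^{2α} − ((α+1)/(α+2)²)a₀₀²) on I × (0,∞), then the transformed function ũ of u under (T, X¹, 0) solves ũ_t + ũ ũ_x = Σ_{j=2}^r c₄a_j x̃^{j+α} ũ_j + c₅ ũ + x̃(c₄²b₂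 x̃^{2α} − ((α+1)/(α+2)²)c₅²) on T(I) × (0,∞). -/
open Real Set Topology Filter
open scoped ContDiff

lemma one_le_inftyWT : (∞ : WithTop ℕ∞) ≠ 0 := by simp

lemma iter_smooth {f : ℝ → ℝ} {s : Set ℝ} (hs : IsOpen s)
    (hf : ContDiffOn ℝ ∞ f s) (n : ℕ) : ContDiffOn ℝ ∞ (iteratedDeriv n f) s := by
  induction n with
  | zero => simpa [iteratedDeriv_zero]
  | succ n ih =>
    rw [iteratedDeriv_succ]
    exact ((contDiffOn_infty_iff_deriv_of_isOpen hs).1 ih).2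

lemma iter_diffAt {f : ℝ → ℝ} {s : Set ℝ} (hs : IsOpen s) (hf : ContDiffOn ℝ ∞ f s)
    (n : ℕ) {x : ℝ} (hx : x ∈ s) : DifferentiableAt ℝ (iteratedDeriv n f) x :=
  ((iter_smooth hs hf n).differentiableOn one_le_inftyWT).differentiableAt (hs.mem_nhds hx)

lemma iter_scale {f : ℝ → ℝ} (hf : ContDiffOn ℝ ∞ f (Ioi 0)) {c : ℝ} (hc : 0 < c) (n : ℕ) :
    ∀ x ∈ Ioi (0:ℝ), iteratedDeriv n (fun y => f (c * y)) x
      = c ^ n * iteratedDeriv n f (c * x) := by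
  induction n with
  | zero => simp
  | succ n ih =>
    intro x hx
    have hev : iteratedDeriv n (fun y => f (c * y))
        =ᶠ[𝓝 x] fun y => c ^ n * iteratedDeriv n f (c * y) :=
      eventually_of_mem (isOpen_Ioi.mem_nhds hx) ih
    rw [iteratedDeriv_succ, hev.deriv_eq]
    have h1 : HasDerivAt (iteratedDeriv n f) (iteratedDeriv (n+1) f (c*x)) (c*x) := by
      have := (iter_diffAt isOpen_Ioi hf n (mul_pos hc hx)).hasDerivAt
      rwa [← iteratedDeriv_succ] at this
    have h2 : HasDerivAt (fun y => iteratedDeriv n f (c * y))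
        (iteratedDeriv (n+1) f (c*x) * c) x :=
      h1.comp x ((hasDerivAt_id x).const_mul c |>.congr_deriv (by ring))
    rw [deriv_const_mul _ h2.differentiableAt, h2.deriv]
    ring

lemma iter_affine {g : ℝ → ℝ} (hg : ContDiffOn ℝ ∞ g (Ioi 0)) (aa bb : ℝ) (n : ℕ) :
    ∀ x ∈ Ioi (0:ℝ), 1 ≤ n → iteratedDeriv n (fun y => aa * g y + bb * y) x
      = aa * iteratedDeriv n g x + (if n = 1 then bb else 0) := by
  induction n with
  | zero => intro x hx h; omega
  | succ n ih =>
    intro x hx _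
    rcases Nat.eq_zero_or_pos n with hn | hn
    · subst hn
      have hgd : DifferentiableAt ℝ g x :=
        (hg.differentiableOn one_le_inftyWT).differentiableAt (isOpen_Ioi.mem_nhds hx)
      simp only [Nat.zero_add, iteratedDeriv_one]
      rw [deriv_fun_add ((hgd.const_mul aa)) ((differentiableAt_fun_id.const_mul bb)),
        deriv_const_mul _ hgd, deriv_const_mul _ differentiableAt_fun_id, deriv_id'']
      simp [iteratedDeriv_one]
    · have hev : iteratedDeriv n (fun y => aa * g y + bb * y)
          =ᶠ[𝓝 x] fun y => aa * iteratedDeriv n g y + (if n = 1 then bb else 0) :=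
        eventually_of_mem (isOpen_Ioi.mem_nhds hx) (fun y hy => ih y hy hn)
      rw [iteratedDeriv_succ, hev.deriv_eq]
      have hgd : DifferentiableAt ℝ (iteratedDeriv n g) x := iter_diffAt isOpen_Ioi hg n hx
      rw [deriv_fun_add ((hgd.const_mul aa)) (differentiableAt_const _),
        deriv_const_mul _ hgd, deriv_const, ← iteratedDeriv_succ]
      have : n + 1 ≠ 1 := by omega
      simp [this, hn.ne']


set_option maxHeartbeats 1000000 in
theorem stmt6 (r : ℕ) (hr : 2 ≤ r)
    (α : ℝ) (hα : α ≠ 0) (hα2 : α ≠ -2)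
    (a : ℕ → ℝ) (har : a r ≠ 0) (a00 b2 : ℝ)
    (c4 c5 : ℝ) (hc4 : c4 ≠ 0)
    (I : Set ℝ) (hIo : IsOpen I) (hIc : I.OrdConnected)
    (T : ℝ → ℝ) (hT : ContDiffOn ℝ (⊤ : ℕ∞) T I)
    (hT' : ∀ t ∈ I, 0 < c4 * deriv T t)
    (hTode : ∀ t ∈ I,
      a00 - (α + 2) / α * (deriv (deriv T) t / deriv T t) = c5 * deriv T t)
    (X1 : ℝ → ℝ) (hX1def : ∀ t ∈ I, X1 t = (c4 * deriv T t) ^ (-(1 / α)))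
    (u : ℝ → ℝ → ℝ)
    (hu : ContDiffOn ℝ (⊤ : ℕ∞) (fun p : ℝ × ℝ => u p.1 p.2) (I ×ˢ Ioi (0 : ℝ)))
    (hueq : ∀ t ∈ I, ∀ x ∈ Ioi (0 : ℝ),
      pdt u t x + u t x * pdx u 1 t x
        = ∑ j ∈ Finset.Icc 2 r, a j * x ^ ((j : ℝ) + α) * pdx u j t x
          + a00 * u t x
          + x * (b2 * x ^ (2 * α) - (α + 1) / (α + 2) ^ 2 * a00 ^ 2))
    (ut : ℝ → ℝ → ℝ)
    (hut : ContDiffOn ℝ (⊤ : ℕ∞) (fun p : ℝ × ℝ => ut p.1 p.2) ((T '' I) ×ˢ Ioi (0 : ℝ)))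
    (hutdef : ∀ t ∈ I, ∀ x ∈ Ioi (0 : ℝ),
      ut (T t) (X1 t * x)
        = X1 t / deriv T t * u t x + deriv X1 t / deriv T t * x) :
    ∀ tt ∈ T '' I, ∀ xt ∈ Ioi (0 : ℝ),
      pdt ut tt xt + ut tt xt * pdx ut 1 tt xt
        = ∑ j ∈ Finset.Icc 2 r, c4 * a j * xt ^ ((j : ℝ) + α) * pdx ut j tt xt
          + c5 * ut tt xt
          + xt * (c4 ^ 2 * b2 * xt ^ (2 * α) - (α + 1) / (α + 2) ^ 2 * c5 ^ 2) := by
  have hα2' : α + 2 ≠ 0 := fun h => hα2 (by linarith)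
  -- smoothness downgrades
  have hTs : ContDiffOn ℝ ∞ T I := hT.of_le (by simp)
  have hus : ContDiffOn ℝ ∞ (fun p : ℝ × ℝ => u p.1 p.2) (I ×ˢ Ioi (0 : ℝ)) := hu.of_le (by simp)
  have huts : ContDiffOn ℝ ∞ (fun p : ℝ × ℝ => ut p.1 p.2) ((T '' I) ×ˢ Ioi (0 : ℝ)) :=
    hut.of_le (by simp)
  have hT1 : ContDiffOn ℝ ∞ (deriv T) I :=
    ((contDiffOn_infty_iff_deriv_of_isOpen hIo).1 hTs).2
  have hAne : ∀ s ∈ I, deriv T s ≠ 0 := by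
    intro s hs h
    have := hT' s hs; rw [h] at this; simp at this
  -- openness of T '' I
  have hTopen : IsOpen (T '' I) := by
    rw [isOpen_iff_mem_nhds]
    rintro _ ⟨s, hs, rfl⟩
    have hsd : HasStrictDerivAt T (deriv T s) s :=
      (hT.contDiffAt (hIo.mem_nhds hs)).hasStrictDerivAt (by simp)
    rw [← hsd.map_nhds_eq (hAne s hs)]
    exact image_mem_map (hIo.mem_nhds hs)
  -- derivative of X1 on I
  have hX1deriv : ∀ s ∈ I, HasDerivAt X1 (-(X1 s * (a00 - c5 * deriv T s)) / (α + 2)) s := by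
    intro s hs
    have hcA : 0 < c4 * deriv T s := hT' s hs
    have hT'd : HasDerivAt (deriv T) (deriv (deriv T) s) s :=
      ((hT1.differentiableOn one_le_inftyWT).differentiableAt (hIo.mem_nhds hs)).hasDerivAt
    have hf : HasDerivAt (fun w => (c4 * deriv T w) ^ (-(1/α)))
        ((c4 * deriv (deriv T) s) * (-(1/α)) * (c4 * deriv T s) ^ (-(1/α) - 1)) s :=
      (hT'd.const_mul c4).rpow_const (Or.inl (ne_of_gt hcA))
    have hev : (fun w => (c4 * deriv T w) ^ (-(1/α))) =ᶠ[𝓝 s] X1 :=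
      eventually_of_mem (hIo.mem_nhds hs) (fun w hw => (hX1def w hw).symm)
    have hX1d := hf.congr_of_eventuallyEq hev.symm
    refine hX1d.congr_deriv (Eq.symm ?_)
    have hpow : (c4 * deriv T s) ^ (-(1/α) - 1)
        = (c4 * deriv T s) ^ (-(1/α)) / (c4 * deriv T s) := by
      rw [Real.rpow_sub hcA, Real.rpow_one]
    rw [hpow, ← hX1def s hs]
    -- ODE: (α+2) * T'' = α * T' * (a00 - c5 * T')
    have hode := hTode s hs
    have hAne' := hAne s hs
    have hBrel : (α + 2) * deriv (deriv T) s
        = α * deriv T s * (a00 - c5 * deriv T s) := by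
      field_simp at hode
      linear_combination -hode
    field_simp
    linear_combination (X1 s) * hBrel
  rintro tt ⟨t, ht, rfl⟩ xt hxt
  have hxtpos : 0 < xt := hxt
  have hcA : 0 < c4 * deriv T t := hT' t ht
  have hAne' : deriv T t ≠ 0 := hAne t ht
  set A := deriv T t with hAdef
  set B := deriv (deriv T) t with hBdef
  set X := X1 t with hXdef
  have hXpos : 0 < X := by
    rw [hXdef, hX1def t ht]; exact Real.rpow_pos_of_pos hcA _
  have hXne : X ≠ 0 := ne_of_gt hXpos
  set x := xt / X with hxdef
  have hx : x ∈ Ioi (0:ℝ) := div_pos hxtpos hXpos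
  have hxpos : 0 < x := hx
  have hxt_eq : X * x = xt := by rw [hxdef]; field_simp
  have hX1d : HasDerivAt X1 (-(X * (a00 - c5 * A)) / (α + 2)) t := hX1deriv t ht
  set XD : ℝ := -(X * (a00 - c5 * A)) / (α + 2) with hXDdef
  have hXD : deriv X1 t = XD := hX1d.deriv
  have hBrel : (α + 2) * B = α * A * (a00 - c5 * A) := by
    have hode := hTode t ht
    rw [← hBdef, ← hAdef] at hode
    have e : (α + 2) * B = α * A * ((α + 2) / α * (B / A)) := by field_simp
    rw [e]; linear_combination (-(α * A)) * hode
  have hBval : B = α * A * (a00 - c5 * A) / (α + 2) := by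
    rw [← hBrel]; field_simp
  have hXα : X ^ α = (c4 * A)⁻¹ := by
    rw [hXdef, hX1def t ht, ← Real.rpow_mul hcA.le,
      show -(1/α) * α = -1 by field_simp, Real.rpow_neg_one]
  -- slice smoothness
  have huslice : ContDiffOn ℝ ∞ (u t) (Ioi 0) :=
    hus.comp (contDiff_const.prodMk contDiff_id).contDiffOn
      (fun y hy => mk_mem_prod ht hy)
  have htt : T t ∈ T '' I := mem_image_of_mem T ht
  have hutslice : ContDiffOn ℝ ∞ (ut (T t)) (Ioi 0) :=
    huts.comp (contDiff_const.prodMk contDiff_id).contDiffOn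
      (fun y hy => mk_mem_prod htt hy)
  -- spatial derivatives of ut
  have hGH : Set.EqOn (fun y => ut (T t) (X * y))
      (fun y => (X / A) * u t y + (XD / A) * y) (Ioi 0) := by
    intro y hy
    have h := hutdef t ht y hy
    rw [hXD] at h
    simpa using h
  have hpdx : ∀ j : ℕ, 1 ≤ j → pdx ut j (T t) xt
      = ((X / A) * iteratedDeriv j (u t) x + (if j = 1 then XD / A else 0)) / X ^ j := by
    intro j hj
    have h1 : iteratedDeriv j (fun y => ut (T t) (X * y)) x
        = X ^ j * iteratedDeriv j (ut (T t)) (X * x) :=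
      iter_scale hutslice hXpos j x hx
    have h2 : iteratedDeriv j (fun y => ut (T t) (X * y)) x
        = iteratedDeriv j (fun y => (X / A) * u t y + (XD / A) * y) x :=
      (hGH.iteratedDeriv_of_isOpen isOpen_Ioi j) hx
    have h3 := iter_affine huslice (X/A) (XD/A) j x hx hj
    have h4 : X ^ j * iteratedDeriv j (ut (T t)) (X * x)
        = (X / A) * iteratedDeriv j (u t) x + (if j = 1 then XD / A else 0) := by
      rw [← h1, h2, h3]
    have h5 : pdx ut j (T t) xt = iteratedDeriv j (ut (T t)) (X * x) := by
      rw [hxt_eq]; rfl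
    rw [h5, eq_div_iff (pow_ne_zero j hXne)]
    linear_combination h4
  -- time derivative via chain rule
  have hFutd : DifferentiableAt ℝ (fun p : ℝ × ℝ => ut p.1 p.2) (T t, xt) :=
    (huts.differentiableOn one_le_inftyWT).differentiableAt
      ((hTopen.prod isOpen_Ioi).mem_nhds (mk_mem_prod htt hxt))
  set L := fderiv ℝ (fun p : ℝ × ℝ => ut p.1 p.2) (T t, xt) with hLdef
  have hL : HasFDerivAt (fun p : ℝ × ℝ => ut p.1 p.2) L (T t, xt) := hFutd.hasFDerivAt
  have hTd : HasDerivAt T A t :=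
    ((hTs.differentiableOn one_le_inftyWT).differentiableAt (hIo.mem_nhds ht)).hasDerivAt
  have hT'd : HasDerivAt (deriv T) B t :=
    ((hT1.differentiableOn one_le_inftyWT).differentiableAt (hIo.mem_nhds ht)).hasDerivAt
  have hγ : HasDerivAt (fun s => (T s, X1 s * x)) ((A, XD * x) : ℝ × ℝ) t :=
    hTd.prodMk (hX1d.mul_const x)
  have hΦd : HasDerivAt (fun s => ut (T s) (X1 s * x)) (L (A, XD * x)) t := by
    exact hL.comp_hasDerivAt_of_eq t hγ
      (by rw [show (X1 t * x : ℝ) = xt from by rw [← hXdef]; exact hxt_eq])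
  have hpdtL : pdt ut (T t) xt = L (1, 0) := by
    have h1 : HasDerivAt (fun s : ℝ => (s, xt)) ((1, 0) : ℝ × ℝ) (T t) :=
      (hasDerivAt_id _).prodMk (hasDerivAt_const _ _)
    have h2 : HasDerivAt (fun s : ℝ => ut s xt) (L (1, 0)) (T t) := hL.comp_hasDerivAt_of_eq _ h1 rfl
    simpa [pdt] using h2.deriv
  have hpdx1L : pdx ut 1 (T t) xt = L (0, 1) := by
    have h1 : HasDerivAt (fun y : ℝ => ((T t : ℝ), y)) ((0, 1) : ℝ × ℝ) xt :=
      (hasDerivAt_const _ _).prodMk (hasDerivAt_id _)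
    have h2 : HasDerivAt (fun y : ℝ => ut (T t) y) (L (0, 1)) xt := hL.comp_hasDerivAt_of_eq _ h1 rfl
    simpa [pdx, iteratedDeriv_one] using h2.deriv
  -- time derivative of the defining formula
  have hFud : DifferentiableAt ℝ (fun p : ℝ × ℝ => u p.1 p.2) (t, x) :=
    (hus.differentiableOn one_le_inftyWT).differentiableAt
      ((hIo.prod isOpen_Ioi).mem_nhds (mk_mem_prod ht hx))
  have hud : HasDerivAt (fun s => u s x) (pdt u t x) t := by
    have h1 : DifferentiableAt ℝ (fun s : ℝ => ((s : ℝ), x)) t :=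
      differentiableAt_id.prodMk (differentiableAt_const x)
    have h2 : DifferentiableAt ℝ (fun s => u s x) t := (hFud.comp t h1 :)
    simpa [pdt] using h2.hasDerivAt
  have hΨd : HasDerivAt
      (fun s => X1 s / deriv T s * u s x
        + -(X1 s * (a00 - c5 * deriv T s)) / (α + 2) / deriv T s * x)
      ((XD * A - X * B) / A ^ 2 * u t x + X / A * pdt u t x
        + (-(XD * (a00 - c5 * A) + X * (0 - c5 * B)) / (α + 2) * A
            - -(X * (a00 - c5 * A)) / (α + 2) * B) / A ^ 2 * x) t :=
    ((hX1d.div hT'd hAne').mul hud).add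
      ((((hX1d.mul ((hasDerivAt_const t a00).sub (hT'd.const_mul c5))).neg.div_const
        (α + 2)).div hT'd hAne').mul_const x)
  have hev : (fun s => ut (T s) (X1 s * x))
      =ᶠ[𝓝 t] (fun s => X1 s / deriv T s * u s x
        + -(X1 s * (a00 - c5 * deriv T s)) / (α + 2) / deriv T s * x) := by
    filter_upwards [hIo.mem_nhds ht] with s hs
    rw [hutdef s hs x hx, (hX1deriv s hs).deriv]
  have hkey : A * pdt ut (T t) xt + XD * x * pdx ut 1 (T t) xt
      = (XD * A - X * B) / A ^ 2 * u t x + X / A * pdt u t x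
        + (-(XD * (a00 - c5 * A) + X * (0 - c5 * B)) / (α + 2) * A
            - -(X * (a00 - c5 * A)) / (α + 2) * B) / A ^ 2 * x := by
    have huniq := hΦd.unique (hΨd.congr_of_eventuallyEq hev)
    rw [hpdtL, hpdx1L, ← huniq,
      show ((A, XD * x) : ℝ × ℝ) = A • ((1:ℝ), (0:ℝ)) + (XD * x) • ((0:ℝ), (1:ℝ)) by
        simp [Prod.ext_iff],
      map_add, map_smul, map_smul, smul_eq_mul, smul_eq_mul]
  -- pointwise value of ut
  have hutval : ut (T t) xt = X / A * u t x + XD / A * x := by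
    rw [← hxt_eq]
    have h := hutdef t ht x hx
    rw [hXD] at h
    simpa using h
  -- rpow bookkeeping
  have hX2α : X ^ (2 * α) = ((c4 * A)⁻¹) ^ 2 := by
    rw [show (2:ℝ) * α = α * 2 by ring, Real.rpow_mul hXpos.le, hXα,
      show (2:ℝ) = ((2:ℕ):ℝ) by norm_num, Real.rpow_natCast]
  have hb2 : xt ^ (2 * α) = ((c4 * A)⁻¹) ^ 2 * x ^ (2 * α) := by
    rw [← hxt_eq, Real.mul_rpow hXpos.le hxpos.le, hX2α]
  -- the sum
  have hsum : ∑ j ∈ Finset.Icc 2 r, c4 * a j * xt ^ ((j:ℝ) + α) * pdx ut j (T t) xt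
      = X / A ^ 2 * ∑ j ∈ Finset.Icc 2 r, a j * x ^ ((j:ℝ) + α) * pdx u j t x := by
    rw [Finset.mul_sum]
    refine Finset.sum_congr rfl (fun j hj => ?_)
    have hj2 : 2 ≤ j := (Finset.mem_Icc.1 hj).1
    have hj1 : j ≠ 1 := by omega
    rw [hpdx j (by omega), if_neg hj1, ← hxt_eq,
      Real.mul_rpow hXpos.le hxpos.le, Real.rpow_add hXpos, Real.rpow_natCast, hXα,
      show pdx u j t x = iteratedDeriv j (u t) x from rfl]
    field_simp
    ring
  -- final assembly
  have hueqn := hueq t ht x hx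
  rw [hpdx 1 le_rfl, if_pos rfl,
    show iteratedDeriv 1 (u t) x = pdx u 1 t x from rfl] at hkey ⊢
  have hPDT : pdt ut (T t) xt
      = ((XD * A - X * B) / A ^ 2 * u t x + X / A * pdt u t x
        + (-(XD * (a00 - c5 * A) + X * (0 - c5 * B)) / (α + 2) * A
            - -(X * (a00 - c5 * A)) / (α + 2) * B) / A ^ 2 * x
        - XD * x * ((X / A * pdx u 1 t x + XD / A) / X ^ 1)) / A := by
    rw [eq_div_iff hAne']
    linear_combination hkey
  have hS : ∑ j ∈ Finset.Icc 2 r, a j * x ^ ((j:ℝ) + α) * pdx u j t x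
      = pdt u t x + u t x * pdx u 1 t x - a00 * u t x
        - x * (b2 * x ^ (2 * α) - (α + 1) / (α + 2) ^ 2 * a00 ^ 2) := by
    linear_combination -hueqn
  rw [hsum, hS, hutval, hb2, hPDT, hXDdef, hBval, ← hxt_eq]
  field_simp
  ring
end

section
/- The usual equivalence group of the subclass F_{I,00} with b₀ = 0 contains all Möbius reparametrizations of time: let r ≥ 2, a₂, …, a_r real with a_r ≠ 0, b₂ real. Let c₁, c₂, c₃, c₀, c₄ be reals with δ := c₁c₀ − c₂c₃ ≠ 0 and c₄δ > 0, let I ⊆ ℝ be an open interval on which c₃t + c₀ ≠ 0, and set T(t) = (c₁t + c₂)/(c₃t + c₀) and X¹(t) = (c₄T′(t))^{1/2} for t ∈ I. If u solves u_t + u u_x = Σ_{j=2}^r a_j x^{j−2} u_j + b₂x^{−3} on I × (0,∞), then the transformed function ũ of u under (T, X¹, 0) solves ũ_t + ũ ũ_x = Σ_{j=2}^r c₄a_j x̃^{j−2} ũ_j + c₄²b₂x̃^{−3} on T(I) × (0,∞). -/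
open Real Set

open Topology

lemma hasDerivAt_iteratedDeriv_of_contDiffOn {f : ℝ → ℝ} {s : Set ℝ}
    (hs : IsOpen s) (hf : ContDiffOn ℝ (⊤ : ℕ∞) f s) (n : ℕ) {z : ℝ} (hz : z ∈ s) :
    HasDerivAt (iteratedDeriv n f) (iteratedDeriv (n + 1) f z) z := by
  have heq : ∀ m : ℕ, Set.EqOn (iteratedDerivWithin m f s) (iteratedDeriv m f) s := by
    intro m y hy
    rw [iteratedDerivWithin_eq_iteratedFDerivWithin, iteratedDeriv_eq_iteratedFDeriv,
      iteratedFDerivWithin_of_isOpen m hs hy]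
  have hdw : DifferentiableWithinAt ℝ (iteratedDerivWithin n f s) s z := by
    refine (hf.differentiableOn_iteratedDerivWithin ?_ hs.uniqueDiffOn) z hz
    exact_mod_cast lt_of_lt_of_le (WithTop.coe_lt_top _) le_rfl
  have hda : DifferentiableAt ℝ (iteratedDeriv n f) z :=
    (hdw.congr (fun y hy => (heq n hy).symm) (heq n hz).symm).differentiableAt
      (hs.mem_nhds hz)
  have := hda.hasDerivAt
  rwa [iteratedDeriv_succ]

lemma pdx_transform {f g : ℝ → ℝ} {L μ ν : ℝ} (hL : 0 < L)
    (hf : ContDiffOn ℝ (⊤ : ℕ∞) f (Ioi 0))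
    (hrel : ∀ x ∈ Ioi (0:ℝ), g (L * x) = μ * f x + ν * x) :
    ∀ j : ℕ, ∀ y ∈ Ioi (0:ℝ),
      iteratedDeriv j g y = μ * (L⁻¹) ^ j * iteratedDeriv j f (L⁻¹ * y)
        + (if j = 0 then ν * (L⁻¹ * y) else if j = 1 then ν * L⁻¹ else 0) := by
  have hL' : L⁻¹ ≠ 0 := inv_ne_zero hL.ne'
  have hgx : ∀ y ∈ Ioi (0:ℝ), g y = μ * f (L⁻¹ * y) + ν * L⁻¹ * y := by
    intro y hy
    have hy' : L⁻¹ * y ∈ Ioi (0:ℝ) := mul_pos (inv_pos.mpr hL) hy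
    have := hrel (L⁻¹ * y) hy'
    rw [show L * (L⁻¹ * y) = y by field_simp] at this
    rw [this]; ring
  intro j
  induction j with
  | zero =>
    intro y hy
    simp only [iteratedDeriv_zero, pow_zero, if_true, reduceIte]
    rw [hgx y hy]; ring
  | succ j ih =>
    intro y hy
    rw [iteratedDeriv_succ]
    have hy' : L⁻¹ * y ∈ Ioi (0:ℝ) := mul_pos (inv_pos.mpr hL) hy
    have hfd : HasDerivAt (iteratedDeriv j f) (iteratedDeriv (j+1) f (L⁻¹ * y)) (L⁻¹ * y) :=
      hasDerivAt_iteratedDeriv_of_contDiffOn isOpen_Ioi hf j hy'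
    have hlin : HasDerivAt (fun z : ℝ => L⁻¹ * z) L⁻¹ y := by
      simpa using (hasDerivAt_id y).const_mul L⁻¹
    have hcomp : HasDerivAt (fun z => iteratedDeriv j f (L⁻¹ * z))
        (iteratedDeriv (j+1) f (L⁻¹ * y) * L⁻¹) y := hfd.comp y hlin
    rcases j with _ | m
    · have hev : (iteratedDeriv 0 g) =ᶠ[𝓝 y]
          (fun z => μ * f (L⁻¹ * z) + ν * L⁻¹ * z) := by
        filter_upwards [isOpen_Ioi.mem_nhds hy] with z hz
        simpa only [iteratedDeriv_zero] using hgx z hz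
      rw [hev.deriv_eq]
      have h1 : HasDerivAt (fun z => μ * f (L⁻¹ * z) + ν * L⁻¹ * z)
          (μ * (iteratedDeriv 1 f (L⁻¹ * y) * L⁻¹) + ν * L⁻¹) y := by
        have h2 := hcomp.const_mul μ
        simp only [iteratedDeriv_zero] at h2
        have h3 : HasDerivAt (fun z : ℝ => ν * L⁻¹ * z) (ν * L⁻¹) y := by
          simpa using (hasDerivAt_id y).const_mul (ν * L⁻¹)
        exact h2.add h3
      rw [h1.deriv]
      norm_num; ring
    · have hev : (iteratedDeriv (m+1) g) =ᶠ[𝓝 y]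
          (fun z => μ * (L⁻¹) ^ (m+1) * iteratedDeriv (m+1) f (L⁻¹ * z)
            + (if m + 1 = 1 then ν * L⁻¹ else 0)) := by
        filter_upwards [isOpen_Ioi.mem_nhds hy] with z hz
        have := ih z hz
        simpa using this
      rw [hev.deriv_eq]
      have h1 : HasDerivAt (fun z => μ * (L⁻¹) ^ (m+1) * iteratedDeriv (m+1) f (L⁻¹ * z)
            + (if m + 1 = 1 then ν * L⁻¹ else 0))
          (μ * (L⁻¹) ^ (m+1) * (iteratedDeriv (m+2) f (L⁻¹ * y) * L⁻¹)) y :=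
        (hcomp.const_mul _).add_const _
      rw [h1.deriv]
      have h4 : m + 1 + 1 ≠ 1 := by omega
      simp only [if_neg (by omega : ¬ m + 1 + 1 = 0), if_neg h4]
      ring

set_option maxHeartbeats 1600000 in
theorem stmt10 (r : ℕ) (hr : 2 ≤ r)
    (a : ℕ → ℝ) (har : a r ≠ 0) (b2 : ℝ)
    (c1 c2 c3 c0 c4 : ℝ) (hδ : c1 * c0 - c2 * c3 ≠ 0)
    (hc4δ : 0 < c4 * (c1 * c0 - c2 * c3))
    (I : Set ℝ) (hIo : IsOpen I) (hIc : I.OrdConnected)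
    (hI : ∀ t ∈ I, c3 * t + c0 ≠ 0)
    (T : ℝ → ℝ) (hTdef : ∀ t ∈ I, T t = (c1 * t + c2) / (c3 * t + c0))
    (X1 : ℝ → ℝ) (hX1def : ∀ t ∈ I, X1 t = (c4 * deriv T t) ^ ((1 : ℝ) / 2))
    (u : ℝ → ℝ → ℝ)
    (hu : ContDiffOn ℝ (⊤ : ℕ∞) (fun p : ℝ × ℝ => u p.1 p.2) (I ×ˢ Ioi (0 : ℝ)))
    (hueq : ∀ t ∈ I, ∀ x ∈ Ioi (0 : ℝ),
      pdt u t x + u t x * pdx u 1 t x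
        = ∑ j ∈ Finset.Icc 2 r, a j * x ^ ((j : ℝ) - 2) * pdx u j t x
          + b2 * x ^ (-3 : ℝ))
    (ut : ℝ → ℝ → ℝ)
    (hut : ContDiffOn ℝ (⊤ : ℕ∞) (fun p : ℝ × ℝ => ut p.1 p.2) ((T '' I) ×ˢ Ioi (0 : ℝ)))
    (hutdef : ∀ t ∈ I, ∀ x ∈ Ioi (0 : ℝ),
      ut (T t) (X1 t * x)
        = X1 t / deriv T t * u t x + deriv X1 t / deriv T t * x) :
    ∀ tt ∈ T '' I, ∀ xt ∈ Ioi (0 : ℝ),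
      pdt ut tt xt + ut tt xt * pdx ut 1 tt xt
        = ∑ j ∈ Finset.Icc 2 r, c4 * a j * xt ^ ((j : ℝ) - 2) * pdx ut j tt xt
          + c4 ^ 2 * b2 * xt ^ (-3 : ℝ) := by
  rintro tt ⟨t, htI, rfl⟩ xt hxt
  set δ : ℝ := c1 * c0 - c2 * c3 with hδdef
  clear_value δ
  -- § sign of the denominator on I
  have hsign : ∀ s ∈ I, 0 < (c3 * s + c0) * (c3 * t + c0) := by
    intro s hs
    rcases lt_or_gt_of_ne (mul_ne_zero (hI s hs) (hI t htI)) with h | h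
    · exfalso
      have hsub : uIcc s t ⊆ I := hIc.uIcc_subset hs htI
      have hcont : ContinuousOn (fun w => c3 * w + c0) (uIcc s t) :=
        (continuous_const.mul continuous_id').add continuous_const |>.continuousOn
      have hiv := intermediate_value_uIcc hcont
      have h0 : (0:ℝ) ∈ uIcc (c3 * s + c0) (c3 * t + c0) := by
        rcases mul_neg_iff.mp h with ⟨h1, h2⟩ | ⟨h1, h2⟩ <;>
          simp [Set.mem_uIcc] <;> [right; left] <;> constructor <;> linarith
      obtain ⟨w, hw, hw0⟩ := hiv h0
      exact hI w (hsub hw) hw0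
    · exact h
  obtain ⟨ε, hεv, hεq⟩ : ∃ ε : ℝ, (ε = 1 ∨ ε = -1) ∧ ∀ s ∈ I, 0 < ε * (c3 * s + c0) := by
    refine ⟨if 0 < c3 * t + c0 then 1 else -1, by split <;> simp, ?_⟩
    intro s hs
    have := hsign s hs
    split
    · next h => nlinarith
    · next h =>
      have h2 : c3 * t + c0 < 0 := lt_of_le_of_ne (not_lt.mp h) (hI t htI)
      nlinarith
  have hε2 : ε ^ 2 = 1 := by rcases hεv with h | h <;> rw [h] <;> ring
  have hεne : ε ≠ 0 := by rcases hεv with h | h <;> rw [h] <;> norm_num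
  -- § derivative of T
  have hTD : ∀ s ∈ I, HasDerivAt T (δ / (c3 * s + c0) ^ 2) s := by
    intro s hs
    have hnum : HasDerivAt (fun w => c1 * w + c2) c1 s := by
      simpa using ((hasDerivAt_id s).const_mul c1).add_const c2
    have hden : HasDerivAt (fun w => c3 * w + c0) c3 s := by
      simpa using ((hasDerivAt_id s).const_mul c3).add_const c0
    have h1 := hnum.div hden (hI s hs)
    have h2 : HasDerivAt (fun w => (c1 * w + c2) / (c3 * w + c0)) (δ / (c3 * s + c0) ^ 2) s := by
      refine h1.congr_deriv ?_
      rw [hδdef]; congr 1; ring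
    apply h2.congr_of_eventuallyEq
    filter_upwards [hIo.mem_nhds hs] with w hw
    exact hTdef w hw
  have hderivT : ∀ s ∈ I, deriv T s = δ / (c3 * s + c0) ^ 2 := fun s hs => (hTD s hs).deriv
  -- § formula for X1
  set k : ℝ := Real.sqrt (c4 * δ) with hkdef
  have hk : 0 < k := Real.sqrt_pos.mpr hc4δ
  have hk2 : k ^ 2 = c4 * δ := Real.sq_sqrt hc4δ.le
  clear_value k
  have hX1 : ∀ s ∈ I, X1 s = k * (ε * (c3 * s + c0))⁻¹ := by
    intro s hs
    rw [hX1def s hs, hderivT s hs]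
    rw [show c4 * (δ / (c3 * s + c0) ^ 2) = (c4 * δ) / (c3 * s + c0) ^ 2 by ring]
    rw [← Real.sqrt_eq_rpow, Real.sqrt_div' _ (sq_nonneg _)]
    rw [Real.sqrt_sq_eq_abs]
    rw [show |c3 * s + c0| = ε * (c3 * s + c0) by
      rcases hεv with h | h <;> rw [h] at hεq ⊢ <;>
      · have := hεq s hs
        rcases abs_cases (c3 * s + c0) with ⟨h1, h2⟩ | ⟨h1, h2⟩ <;> linarith]
    rw [div_eq_mul_inv, ← hkdef]
  have hX1pos : ∀ s ∈ I, 0 < X1 s := by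
    intro s hs
    rw [hX1 s hs]
    exact mul_pos hk (inv_pos.mpr (hεq s hs))
  -- § derivative of X1
  have hX1D : ∀ s ∈ I, HasDerivAt X1 (-(k * ε * c3) / (c3 * s + c0) ^ 2) s := by
    intro s hs
    have hden : HasDerivAt (fun w => ε * (c3 * w + c0)) (ε * c3) s := by
      simpa using (((hasDerivAt_id s).const_mul c3).add_const c0).const_mul ε
    have h1 := (hden.inv (ne_of_gt (hεq s hs))).const_mul k
    have h2 : HasDerivAt (fun w => k * (ε * (c3 * w + c0))⁻¹)
        (-(k * ε * c3) / (c3 * s + c0) ^ 2) s := by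
      refine h1.congr_deriv ?_
      have h3 : (ε * (c3 * s + c0)) ^ 2 = (c3 * s + c0) ^ 2 := by
        rw [mul_pow, hε2, one_mul]
      rw [← h3]; ring
    apply h2.congr_of_eventuallyEq
    filter_upwards [hIo.mem_nhds hs] with w hw
    exact hX1 w hw
  have hderivX1 : ∀ s ∈ I, deriv X1 s = -(k * ε * c3) / (c3 * s + c0) ^ 2 :=
    fun s hs => (hX1D s hs).deriv
  -- § fixed-point abbreviations
  have hQ : c3 * t + c0 ≠ 0 := hI t htI
  have hL : 0 < X1 t := hX1pos t htI
  -- replace xt by X1 t * x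
  obtain ⟨x, hx, rfl⟩ : ∃ x, x ∈ Ioi (0:ℝ) ∧ X1 t * x = xt :=
    ⟨xt / X1 t, div_pos hxt hL, mul_div_cancel₀ _ hL.ne'⟩
  set w : ℝ := X1 t * x with hw
  have hwpos : 0 < w := mul_pos hL hx
  clear_value w
  -- § smoothness of u t in space
  have hus : ContDiffOn ℝ (⊤ : ℕ∞) (u t) (Ioi 0) := by
    have hcomp : ContDiffOn ℝ (⊤ : ℕ∞) (fun y : ℝ => (t, y)) (Ioi (0:ℝ)) :=
      (contDiff_const.prodMk contDiff_id).contDiffOn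
    exact hu.comp hcomp (fun y hy => ⟨htI, hy⟩)
  -- § spatial derivatives of ut (T t)
  have h1 := pdx_transform hL hus (fun y hy => hutdef t htI y hy)
  have hinv : ∀ y : ℝ, (X1 t)⁻¹ * (X1 t * y) = y := by
    intro y; field_simp
  have hpdx1 : pdx ut 1 (T t) w
      = X1 t / deriv T t * ((X1 t)⁻¹ * pdx u 1 t x) + deriv X1 t / deriv T t * (X1 t)⁻¹ := by
    have h2 := h1 1 (X1 t * x) (mul_pos hL hx)
    rw [hinv] at h2
    norm_num at h2
    unfold pdx
    simp only [iteratedDeriv_one]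
    rw [hw, h2]
    ring
  have hpdxj : ∀ j : ℕ, 2 ≤ j → pdx ut j (T t) w
      = X1 t / deriv T t * ((X1 t)⁻¹) ^ j * pdx u j t x := by
    intro j hj
    have h2 := h1 j (X1 t * x) (mul_pos hL hx)
    rw [hinv] at h2
    rw [if_neg (by omega), if_neg (by omega), add_zero] at h2
    show iteratedDeriv j (ut (T t)) w = _
    rw [hw, h2]; rfl
  have hval : ut (T t) w
      = X1 t / deriv T t * u t x + deriv X1 t / deriv T t * x := by
    rw [hw]; exact hutdef t htI x hx
  -- § time derivative of ut
  have hxw : ε / k * w * (c3 * t + c0) = x := by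
    rw [hw, hX1 t htI]
    field_simp [hεne, hk.ne', hQ]
  set G : ℝ → ℝ := fun s => k * ε / δ * ((c3 * s + c0) *
      u s (ε / k * w * (c3 * s + c0))) + -(k * ε * c3) / δ * (ε / k * w * (c3 * s + c0))
    with hGdef
  set G' : ℝ := k * ε / δ * (c3 * u t x + (c3 * t + c0) *
      (pdt u t x + ε / k * w * c3 * pdx u 1 t x)) + -(k * ε * c3) / δ * (ε / k * w * c3)
    with hG'def
  have hGe : ∀ s ∈ I, G s = ut (T s) w := by
    intro s hs
    have hx' : ε / k * w * (c3 * s + c0) ∈ Ioi (0:ℝ) := by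
      have h5 : ε / k * w * (c3 * s + c0) = ε * (c3 * s + c0) * w / k := by ring
      rw [mem_Ioi, h5]
      exact div_pos (mul_pos (hεq s hs) hwpos) hk
    have h6 := hutdef s hs _ hx'
    have harg : X1 s * (ε / k * w * (c3 * s + c0)) = w := by
      rw [hX1 s hs]
      field_simp [hεne, hk.ne', hI s hs]
    rw [harg] at h6
    have A1 : X1 s / deriv T s = k * ε / δ * (c3 * s + c0) := by
      have hinv' : (ε * (c3 * s + c0))⁻¹ = ε * (c3 * s + c0)⁻¹ := by
        rw [mul_inv]; rcases hεv with h | h <;> rw [h] <;> norm_num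
      rw [hX1 s hs, hderivT s hs, hinv']
      field_simp [hδ, hI s hs]
    have A2 : deriv X1 s / deriv T s = -(k * ε * c3) / δ := by
      rw [hderivX1 s hs, hderivT s hs, div_div_div_comm,
        div_self (pow_ne_zero 2 (hI s hs)), div_one]
    rw [A1, A2] at h6
    rw [hGdef]
    show k * ε / δ * ((c3 * s + c0) * u s (ε / k * w * (c3 * s + c0)))
        + -(k * ε * c3) / δ * (ε / k * w * (c3 * s + c0)) = ut (T s) w
    rw [h6]
    ring
  have hopen : IsOpen (I ×ˢ Ioi (0:ℝ)) := hIo.prod isOpen_Ioi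
  have hmem : (t, x) ∈ I ×ˢ Ioi (0:ℝ) := ⟨htI, hx⟩
  have hdF : DifferentiableAt ℝ (fun p : ℝ × ℝ => u p.1 p.2) (t, x) := by
    have h7 := hu.contDiffAt (hopen.mem_nhds hmem)
    exact h7.differentiableAt (by simp)
  set F' := fderiv ℝ (fun p : ℝ × ℝ => u p.1 p.2) (t, x) with hF'def
  have hF : HasFDerivAt (fun p : ℝ × ℝ => u p.1 p.2) F' (t, x) := hdF.hasFDerivAt
  have h10 : F' (1, 0) = pdt u t x := by
    have hγ : HasDerivAt (fun s : ℝ => (s, x)) ((1:ℝ), (0:ℝ)) t :=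
      (hasDerivAt_id t).prodMk (hasDerivAt_const t x)
    have hc := hF.comp_hasDerivAt t hγ
    simp only [pdt]
    exact hc.deriv.symm
  have h01 : F' (0, 1) = pdx u 1 t x := by
    have hγ : HasDerivAt (fun y : ℝ => (t, y)) ((0:ℝ), (1:ℝ)) x :=
      (hasDerivAt_const x t).prodMk (hasDerivAt_id x)
    have hc := hF.comp_hasDerivAt x hγ
    simp only [pdx, iteratedDeriv_one]
    exact hc.deriv.symm
  have hγd : HasDerivAt (fun s : ℝ => ε / k * w * (c3 * s + c0)) (ε / k * w * c3) t := by
    have := (((hasDerivAt_id t).const_mul c3).add_const c0).const_mul (ε / k * w)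
    simpa [mul_comm, mul_assoc] using this
  have hcurve : HasDerivAt (fun s : ℝ => (s, ε / k * w * (c3 * s + c0)))
      ((1:ℝ), ε / k * w * c3) t := (hasDerivAt_id t).prodMk hγd
  have hF2 : HasFDerivAt (fun p : ℝ × ℝ => u p.1 p.2) F' (t, ε / k * w * (c3 * t + c0)) := by
    rw [hxw]; exact hF
  have huc : HasDerivAt (fun s => u s (ε / k * w * (c3 * s + c0)))
      (F' (1, ε / k * w * c3)) t := by
    have := hF2.comp_hasDerivAt t hcurve; exact this
  have hFlin : F' (1, ε / k * w * c3) = pdt u t x + ε / k * w * c3 * pdx u 1 t x := by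
    have h8 : ((1:ℝ), ε / k * w * c3) = ((1:ℝ), (0:ℝ)) + (ε / k * w * c3) • ((0:ℝ), (1:ℝ)) := by
      simp [Prod.ext_iff]
    rw [h8, map_add, map_smul, h10, h01]
    simp [smul_eq_mul]
  rw [hFlin] at huc
  have hqd : HasDerivAt (fun s => c3 * s + c0) c3 t := by
    simpa using ((hasDerivAt_id t).const_mul c3).add_const c0
  have hprod := hqd.mul huc
  have hGd : HasDerivAt G G' t := by
    have h9 := (hprod.const_mul (k * ε / δ)).add (hγd.const_mul (-(k * ε * c3) / δ))
    beta_reduce at h9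
    rw [hGdef, hG'def]
    refine h9.congr_deriv ?_
    rw [hxw]
  -- inverse Möbius map
  have hnum0 : ∀ s ∈ I, c0 * T s - c2 = δ * s / (c3 * s + c0) := by
    intro s hs
    have hq := div_mul_cancel₀ (c1 * s + c2) (hI s hs)
    rw [hTdef s hs, hδdef, eq_div_iff (hI s hs)]; linear_combination c0 * hq
  have hden0 : ∀ s ∈ I, -c3 * T s + c1 = δ / (c3 * s + c0) := by
    intro s hs; rw [hTdef s hs]; field_simp [hI s hs]; rw [hδdef]; ring
  have hdne : -c3 * T t + c1 ≠ 0 := by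
    rw [hden0 t htI]; exact div_ne_zero hδ hQ
  set S : ℝ → ℝ := fun τ => (c0 * τ - c2) / (-c3 * τ + c1) with hSdef
  have hST : ∀ s ∈ I, S (T s) = s := by
    intro s hs
    show (c0 * T s - c2) / (-c3 * T s + c1) = s
    rw [hnum0 s hs, hden0 s hs, div_div_div_comm, div_self (hI s hs), div_one,
      mul_comm, mul_div_assoc, div_self hδ, mul_one]
  have hSd : HasDerivAt S ((c3 * t + c0) ^ 2 / δ) (T t) := by
    have hnum : HasDerivAt (fun τ => c0 * τ - c2) c0 (T t) := by
      simpa using ((hasDerivAt_id (T t)).const_mul c0).sub_const c2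
    have hden : HasDerivAt (fun τ => -c3 * τ + c1) (-c3) (T t) := by
      simpa using ((hasDerivAt_id (T t)).const_mul (-c3)).add_const c1
    have h7 := hnum.div hden hdne
    refine h7.congr_deriv ?_
    rw [hnum0 t htI, hden0 t htI]
    field_simp
    ring
  have hUo : IsOpen ({τ : ℝ | -c3 * τ + c1 ≠ 0} ∩ S ⁻¹' I) := by
    have hV : IsOpen {τ : ℝ | -c3 * τ + c1 ≠ 0} := by
      have : Continuous fun τ : ℝ => -c3 * τ + c1 :=
        (continuous_const.mul continuous_id').add continuous_const
      exact isOpen_ne_fun this continuous_const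
    have hSc : ContinuousOn S {τ : ℝ | -c3 * τ + c1 ≠ 0} := by
      apply ContinuousOn.div
      · exact (continuous_const.mul continuous_id').sub continuous_const |>.continuousOn
      · exact (continuous_const.mul continuous_id').add continuous_const |>.continuousOn
      · exact fun τ hτ => hτ
    exact hSc.isOpen_inter_preimage hV hIo
  have hTtU : T t ∈ {τ : ℝ | -c3 * τ + c1 ≠ 0} ∩ S ⁻¹' I := by
    refine ⟨hdne, ?_⟩
    rw [mem_preimage, hST t htI]; exact htI
  have hTS : ∀ τ ∈ ({τ : ℝ | -c3 * τ + c1 ≠ 0} ∩ S ⁻¹' I), T (S τ) = τ := by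
    intro τ hτ
    obtain ⟨hτ1, hτ2⟩ := hτ
    have hd : -c3 * τ + c1 ≠ 0 := hτ1
    rw [hTdef _ hτ2]
    show (c1 * ((c0 * τ - c2) / (-c3 * τ + c1)) + c2)
        / (c3 * ((c0 * τ - c2) / (-c3 * τ + c1)) + c0) = τ
    have e1 : c1 * ((c0 * τ - c2) / (-c3 * τ + c1)) + c2 = δ * τ / (-c3 * τ + c1) := by
      rw [eq_div_iff hd, add_mul, mul_assoc, div_mul_cancel₀ _ hd, hδdef]; ring
    have e2 : c3 * ((c0 * τ - c2) / (-c3 * τ + c1)) + c0 = δ / (-c3 * τ + c1) := by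
      rw [eq_div_iff hd, add_mul, mul_assoc, div_mul_cancel₀ _ hd, hδdef]; ring
    rw [e1, e2, div_div_div_comm, div_self hd, div_one, mul_comm, mul_div_assoc,
      div_self hδ, mul_one]
  have hev : (fun τ => ut τ w) =ᶠ[𝓝 (T t)] (G ∘ S) := by
    filter_upwards [hUo.mem_nhds hTtU] with τ hτ
    show ut τ w = G (S τ)
    rw [hGe (S τ) hτ.2, hTS τ hτ]
  have hpdtut : pdt ut (T t) w = G' * ((c3 * t + c0) ^ 2 / δ) := by
    have hGd2 : HasDerivAt G G' (S (T t)) := by rw [hST t htI]; exact hGd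
    have hGS : HasDerivAt (G ∘ S) (G' * ((c3 * t + c0) ^ 2 / δ)) (T t) :=
      hGd2.comp (T t) hSd
    simp only [pdt]
    rw [hev.deriv_eq]
    exact hGS.deriv
  -- § transform the sum
  have hsum : ∑ j ∈ Finset.Icc 2 r, c4 * a j * w ^ ((j : ℝ) - 2) * pdx ut j (T t) w
      = c4 * (X1 t / deriv T t) * ((X1 t)⁻¹) ^ 2
        * ∑ j ∈ Finset.Icc 2 r, a j * x ^ ((j : ℝ) - 2) * pdx u j t x := by
    rw [Finset.mul_sum]
    apply Finset.sum_congr rfl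
    intro j hj
    have hj2 : 2 ≤ j := (Finset.mem_Icc.mp hj).1
    rw [hpdxj j hj2]
    have hkey : w ^ ((j : ℝ) - 2) * ((X1 t)⁻¹) ^ j = x ^ ((j : ℝ) - 2) * ((X1 t)⁻¹) ^ 2 := by
      rw [hw, Real.mul_rpow hL.le (le_of_lt hx)]
      rw [show ((j : ℝ) - 2) = ((j - 2 : ℕ) : ℝ) by rw [Nat.cast_sub hj2]; norm_num]
      rw [Real.rpow_natCast, Real.rpow_natCast]
      rw [show ((X1 t)⁻¹) ^ j = ((X1 t)⁻¹) ^ (j - 2) * ((X1 t)⁻¹) ^ 2 by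
        rw [← pow_add]; congr 1; omega]
      rw [show X1 t ^ (j - 2) * x ^ (j - 2) * (((X1 t)⁻¹) ^ (j - 2) * ((X1 t)⁻¹) ^ 2)
          = (X1 t * (X1 t)⁻¹) ^ (j - 2) * (x ^ (j - 2) * ((X1 t)⁻¹) ^ 2) by
        rw [mul_pow]; ring]
      rw [mul_inv_cancel₀ hL.ne', one_pow, one_mul]
    calc c4 * a j * w ^ ((j : ℝ) - 2)
          * (X1 t / deriv T t * ((X1 t)⁻¹) ^ j * pdx u j t x)
        = c4 * (X1 t / deriv T t) * (w ^ ((j : ℝ) - 2) * ((X1 t)⁻¹) ^ j)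
          * (a j * pdx u j t x) := by ring
      _ = c4 * (X1 t / deriv T t) * (x ^ ((j : ℝ) - 2) * ((X1 t)⁻¹) ^ 2)
          * (a j * pdx u j t x) := by rw [hkey]
      _ = c4 * (X1 t / deriv T t) * ((X1 t)⁻¹) ^ 2
          * (a j * x ^ ((j : ℝ) - 2) * pdx u j t x) := by ring
  have hX3 : w ^ (-3 : ℝ) = ((X1 t) ^ 3)⁻¹ * x ^ (-3 : ℝ) := by
    rw [hw, Real.mul_rpow hL.le (le_of_lt hx)]
    congr 1
    rw [show (-3 : ℝ) = -((3 : ℕ) : ℝ) by norm_num, Real.rpow_neg hL.le, Real.rpow_natCast]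
  have hSsum := hueq t htI x hx
  -- § final assembly
  rw [hpdtut, hval, hpdx1, hsum, hX3]
  rw [show (∑ j ∈ Finset.Icc 2 r, a j * x ^ ((j : ℝ) - 2) * pdx u j t x)
      = pdt u t x + u t x * pdx u 1 t x - b2 * x ^ (-3 : ℝ) by linarith]
  rw [hG'def, hw]
  rw [hderivT t htI, hderivX1 t htI, hX1 t htI]
  rw [show c4 = k ^ 2 / δ by field_simp; linarith [hk2]]
  set Q : ℝ := c3 * t + c0 with hQdef
  clear_value Q
  rcases hεv with h | h <;> subst h <;> field_simp [hδ, hQ, hk.ne'] <;> ring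
end

section
/- Explicit solution of the first-order ODE occurring in the equivalence groups: let γ, δ, c₁, c₂ be real constants with γ ≠ 0, δ ≠ 0 and c₁ ≠ 0, and let I ⊆ ℝ be an open interval on which A(t) := γ·(c₁(e^{δt} − 1)/δ + c₂) + 1 > 0. Then the function T(t) = (1/γ)·ln A(t) is smooth on I, T′(t) = c₁e^{δt}/A(t) is nowhere zero on I, and T satisfies γ = δ·(1/T′) + (1/T′)′ at every point of I. -/
open Real Set

theorem stmt11 (γ δ c1 c2 : ℝ) (hγ : γ ≠ 0) (hδ : δ ≠ 0) (hc1 : c1 ≠ 0)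
    (I : Set ℝ) (hIo : IsOpen I) (hIc : I.OrdConnected)
    (A : ℝ → ℝ)
    (hAdef : ∀ t : ℝ, A t = γ * (c1 * (Real.exp (δ * t) - 1) / δ + c2) + 1)
    (hApos : ∀ t ∈ I, 0 < A t)
    (T : ℝ → ℝ) (hTdef : ∀ t : ℝ, T t = (1 / γ) * Real.log (A t)) :
    ContDiffOn ℝ (⊤ : ℕ∞) T I ∧
    (∀ t ∈ I, deriv T t = c1 * Real.exp (δ * t) / A t) ∧
    (∀ t ∈ I, deriv T t ≠ 0) ∧
    (∀ t ∈ I, γ = δ * (1 / deriv T t) + deriv (fun s => 1 / deriv T s) t) := by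
  have hexp : ∀ t : ℝ, HasDerivAt (fun s => Real.exp (δ * s)) (δ * Real.exp (δ * t)) t := by
    intro t
    have h := ((hasDerivAt_id t).const_mul δ).exp
    simpa [mul_comm] using h
  have hAfun : A = fun t => γ * (c1 * (Real.exp (δ * t) - 1) / δ + c2) + 1 := funext hAdef
  have hA' : ∀ t : ℝ, HasDerivAt A (γ * (c1 * Real.exp (δ * t))) t := by
    intro t
    rw [hAfun]
    have h := ((((((hexp t).sub_const 1).const_mul c1).div_const δ).add_const c2).const_mul
      γ).add_const 1
    refine h.congr_deriv ?_
    field_simp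
  have hTfun : T = fun t => (1 / γ) * Real.log (A t) := funext hTdef
  have hT' : ∀ t ∈ I, HasDerivAt T (c1 * Real.exp (δ * t) / A t) t := by
    intro t ht
    have hAt := (hApos t ht).ne'
    have h := ((hA' t).log hAt).const_mul (1 / γ)
    rw [hTfun]
    refine h.congr_deriv ?_
    field_simp
  have hdT : ∀ t ∈ I, deriv T t = c1 * Real.exp (δ * t) / A t := fun t ht => (hT' t ht).deriv
  have hcd : ContDiffOn ℝ (⊤ : ℕ∞) T I := by
    rw [hTfun]
    have hAcd : ContDiff ℝ (⊤ : ℕ∞) A := by rw [hAfun]; fun_prop (disch := intros; assumption)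
    exact contDiffOn_const.mul ((hAcd.contDiffOn).log (fun t ht => (hApos t ht).ne'))
  refine ⟨hcd, hdT, ?_, ?_⟩
  · intro t ht
    rw [hdT t ht]
    exact div_ne_zero (mul_ne_zero hc1 (Real.exp_ne_zero _)) (hApos t ht).ne'
  · intro t ht
    have hmem : I ∈ nhds t := hIo.mem_nhds ht
    have hg : ∀ s ∈ I, (1 : ℝ) / deriv T s = A s * Real.exp (-(δ * s)) / c1 := by
      intro s hs
      rw [hdT s hs, Real.exp_neg]
      have hAs := (hApos s hs).ne'
      field_simp
    have heq : (fun s => 1 / deriv T s) =ᶠ[nhds t] (fun s => A s * Real.exp (-(δ * s)) / c1) :=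
      Filter.eventually_of_mem hmem hg
    have hgd : HasDerivAt (fun s => A s * Real.exp (-(δ * s)) / c1)
        (γ - δ * (A t * Real.exp (-(δ * t)) / c1)) t := by
      have he : HasDerivAt (fun s => Real.exp (-(δ * s))) (-δ * Real.exp (-(δ * t))) t := by
        have h := ((hasDerivAt_id t).const_mul (-δ)).exp
        simpa [neg_mul, mul_comm] using h
      have h := ((hA' t).mul he).div_const c1
      refine h.congr_deriv ?_
      rw [Real.exp_neg]
      field_simp
      ring
    rw [heq.deriv_eq, hgd.deriv, hdT t ht, Real.exp_neg]
    have hAt := (hApos t ht).ne'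
    field_simp
    ring
end

section
/- The usual equivalence group of the normalized subclass F_{II,0}: let r ≥ 2, a₂, …, a_r real with a_r ≠ 0, a₀₀, b₀ real, and let c₁ ≠ 0, c₂, c₃, c₄ ≠ 0 be real constants. If u solves u_t + u u_x = Σ_{j=2}^r a_j x^j u_j + a₀₀ u + b₀ x on ℝ², then the function ũ defined by ũ(c₁t + c₂, c₄e^{c₃t}x) = (c₄e^{c₃t}/c₁)(u(t,x) + c₃x) solves ũ_t + ũ ũ_x = Σ_{j=2}^r (a_j/c₁) x̃^j ũ_j + ((a₀₀ + 2c₃)/c₁) ũ + ((b₀ − a₀₀c₃ − c₃²)/c₁²) x̃ on ℝ². -/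
open Real Set

lemma my_iteratedDeriv_const_mul' {n : ℕ} (c : ℝ) {f : ℝ → ℝ} (hf : ContDiff ℝ n f) (x : ℝ) :
    iteratedDeriv n (fun y => c * f y) x = c * iteratedDeriv n f x := by
  simp only [← iteratedDerivWithin_univ]
  exact iteratedDerivWithin_const_mul (Set.mem_univ x) uniqueDiffOn_univ c hf.contDiffWithinAt

lemma my_iteratedDeriv_add' {n : ℕ} {f g : ℝ → ℝ} (hf : ContDiff ℝ n f) (hg : ContDiff ℝ n g)
    (x : ℝ) :
    iteratedDeriv n (fun y => f y + g y) x = iteratedDeriv n f x + iteratedDeriv n g x := by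
  simp only [← iteratedDerivWithin_univ]
  exact iteratedDerivWithin_add (Set.mem_univ x) uniqueDiffOn_univ hf.contDiffWithinAt hg.contDiffWithinAt

lemma my_iteratedDeriv_zero_fun : ∀ k : ℕ, iteratedDeriv k (fun _ : ℝ => (0:ℝ)) = fun _ => 0 := by
  intro k
  induction k with
  | zero => simp [iteratedDeriv_zero]
  | succ k ih =>
    rw [iteratedDeriv_succ']
    have : deriv (fun _ : ℝ => (0:ℝ)) = fun _ => 0 := by funext y; simp
    rw [this, ih]

lemma my_iteratedDeriv_linear (c3 : ℝ) {j : ℕ} (hj : 2 ≤ j) :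
    iteratedDeriv j (fun y : ℝ => c3 * y) = fun _ => 0 := by
  obtain ⟨k, rfl⟩ : ∃ k, j = k + 1 + 1 := ⟨j - 2, by omega⟩
  rw [iteratedDeriv_succ', iteratedDeriv_succ']
  have h1 : deriv (fun y : ℝ => c3 * y) = fun _ => c3 := by
    funext y
    simpa using ((hasDerivAt_id y).const_mul c3).deriv
  have h2 : deriv (fun _ : ℝ => c3) = fun _ : ℝ => (0:ℝ) := by funext y; simp
  rw [h1, h2, my_iteratedDeriv_zero_fun]

lemma my_hasDerivAt_comp2 {u : ℝ → ℝ → ℝ} (hu : ContDiff ℝ (⊤ : ℕ∞) (fun p : ℝ × ℝ => u p.1 p.2))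
    {g h : ℝ → ℝ} {g' h' : ℝ} {t : ℝ} (hg : HasDerivAt g g' t) (hh : HasDerivAt h h' t) :
    HasDerivAt (fun s => u (g s) (h s))
      (pdt u (g t) (h t) * g' + pdx u 1 (g t) (h t) * h') t := by
  have hud : Differentiable ℝ (fun p : ℝ × ℝ => u p.1 p.2) := hu.differentiable (by simp)
  set L := fderiv ℝ (fun p : ℝ × ℝ => u p.1 p.2) (g t, h t) with hL
  have hF : HasFDerivAt (fun p : ℝ × ℝ => u p.1 p.2) L (g t, h t) := (hud _).hasFDerivAt
  have hγ : HasDerivAt (fun s => (g s, h s)) (g', h') t := hg.prodMk hh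
  have hmain : HasDerivAt (fun s => u (g s) (h s)) (L (g', h')) t :=
    hF.comp_hasDerivAt (f := fun s => (g s, h s)) t hγ
  have hpt : pdt u (g t) (h t) = L (1, 0) := by
    have hc : HasDerivAt (fun s : ℝ => (s, h t)) ((1:ℝ), (0:ℝ)) (g t) :=
      (hasDerivAt_id (g t)).prodMk (hasDerivAt_const (g t) (h t))
    have h2 : HasDerivAt (fun s => u s (h t)) (L (1, 0)) (g t) :=
      hF.comp_hasDerivAt (f := fun s : ℝ => (s, h t)) (g t) hc
    simp only [pdt]
    exact h2.deriv
  have hpx : pdx u 1 (g t) (h t) = L (0, 1) := by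
    have hc : HasDerivAt (fun y : ℝ => (g t, y)) ((0:ℝ), (1:ℝ)) (h t) :=
      (hasDerivAt_const (h t) (g t)).prodMk (hasDerivAt_id (h t))
    have h2 : HasDerivAt (fun y => u (g t) y) (L (0, 1)) (h t) :=
      hF.comp_hasDerivAt (h t) hc
    simp only [pdx, iteratedDeriv_one]
    exact h2.deriv
  have hlin : L (g', h') = g' * L (1, 0) + h' * L (0, 1) := by
    have hv : (g', h') = g' • ((1:ℝ), (0:ℝ)) + h' • ((0:ℝ), (1:ℝ)) := by
      simp [Prod.ext_iff]
    rw [hv, map_add, map_smul, map_smul]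
    simp [smul_eq_mul]
  rw [hpt, hpx]
  have h4 : L (1, 0) * g' + L (0, 1) * h' = L (g', h') := by rw [hlin]; ring
  rw [h4]
  exact hmain

theorem stmt12 (r : ℕ) (hr : 2 ≤ r)
    (a : ℕ → ℝ) (har : a r ≠ 0) (a00 b0 : ℝ)
    (c1 c2 c3 c4 : ℝ) (hc1 : c1 ≠ 0) (hc4 : c4 ≠ 0)
    (u : ℝ → ℝ → ℝ) (hu : ContDiff ℝ (⊤ : ℕ∞) (fun p : ℝ × ℝ => u p.1 p.2))
    (hueq : ∀ t x : ℝ,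
      pdt u t x + u t x * pdx u 1 t x
        = ∑ j ∈ Finset.Icc 2 r, a j * x ^ j * pdx u j t x
          + a00 * u t x + b0 * x)
    (ut : ℝ → ℝ → ℝ) (hut : ContDiff ℝ (⊤ : ℕ∞) (fun p : ℝ × ℝ => ut p.1 p.2))
    (hutdef : ∀ t x : ℝ,
      ut (c1 * t + c2) (c4 * Real.exp (c3 * t) * x)
        = c4 * Real.exp (c3 * t) / c1 * (u t x + c3 * x)) :
    ∀ tt xt : ℝ,
      pdt ut tt xt + ut tt xt * pdx ut 1 tt xt
        = ∑ j ∈ Finset.Icc 2 r, a j / c1 * xt ^ j * pdx ut j tt xt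
          + (a00 + 2 * c3) / c1 * ut tt xt
          + (b0 - a00 * c3 - c3 ^ 2) / c1 ^ 2 * xt := by
  intro tt xt
  set t := (tt - c2) / c1 with ht
  set lam := c4 * Real.exp (c3 * t) with hlam
  set x := xt / c4 * Real.exp (-(c3 * t)) with hx
  have hlne : lam ≠ 0 := by rw [hlam]; exact mul_ne_zero hc4 (Real.exp_ne_zero _)
  have htt : c1 * t + c2 = tt := by rw [ht]; field_simp; ring
  have e1 : Real.exp (c3 * t) * Real.exp (-(c3 * t)) = 1 := by rw [← Real.exp_add]; simp
  have hxtlam : lam * x = xt := by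
    rw [hlam, hx]; field_simp; linear_combination xt * e1
  -- smoothness of slices
  have hct : ContDiff ℝ (⊤ : ℕ∞) (u t) := hu.comp (contDiff_const.prodMk contDiff_id)
  have hctt : ContDiff ℝ (⊤ : ℕ∞) (ut tt) := hut.comp (contDiff_const.prodMk contDiff_id)
  -- value of ut
  have hutx : ut tt xt = lam / c1 * (u t x + c3 * x) := by
    have h := hutdef t x
    rw [htt] at h
    rw [show c4 * Real.exp (c3 * t) * x = xt from by rw [← hlam]; exact hxtlam] at h
    rw [hlam]
    exact h
  -- spatial derivatives
  have hkey : ∀ j : ℕ, lam ^ j * pdx ut j tt xt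
      = lam / c1 * (pdx u j t x + iteratedDeriv j (fun y => c3 * y) x) := by
    intro j
    have hfun : (fun y => ut tt (lam * y)) = fun y => lam / c1 * (u t y + c3 * y) := by
      funext y
      have h := hutdef t y
      rw [htt] at h
      rw [hlam]
      exact h
    have h1 := congrFun (iteratedDeriv_comp_const_mul (n := j) (f := ut tt) (hctt.of_le (by exact_mod_cast le_top)) lam) x
    rw [hfun, hxtlam] at h1
    have h2 : iteratedDeriv j (fun y => lam / c1 * (u t y + c3 * y)) x
        = lam / c1 * (iteratedDeriv j (u t) x + iteratedDeriv j (fun y => c3 * y) x) := by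
      have hcd3 : ContDiff ℝ (j : ℕ∞) (fun y : ℝ => c3 * y) := by
        exact contDiff_const.mul contDiff_id
      rw [my_iteratedDeriv_const_mul' (f := fun y => u t y + c3 * y) (lam / c1)
        ((hct.of_le (by exact_mod_cast le_top)).add hcd3) x,
        my_iteratedDeriv_add' (f := u t) (g := fun y => c3 * y)
          (hct.of_le (by exact_mod_cast le_top)) hcd3 x]
    simp only [pdx]
    rw [← h1, h2]
  have hpdx1 : pdx ut 1 tt xt = (pdx u 1 t x + c3) / c1 := by
    have hk := hkey 1
    rw [pow_one] at hk
    have hL1 : iteratedDeriv 1 (fun y : ℝ => c3 * y) x = c3 := by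
      rw [iteratedDeriv_one]
      simpa using ((hasDerivAt_id x).const_mul c3).deriv
    rw [hL1] at hk
    have h2 : lam * pdx ut 1 tt xt = lam * ((pdx u 1 t x + c3) / c1) := by
      linear_combination hk
    exact mul_left_cancel₀ hlne h2
  have hsum : ∑ j ∈ Finset.Icc 2 r, a j / c1 * xt ^ j * pdx ut j tt xt
      = lam / c1 ^ 2 * ∑ j ∈ Finset.Icc 2 r, a j * x ^ j * pdx u j t x := by
    rw [Finset.mul_sum]
    refine Finset.sum_congr rfl fun j hj => ?_
    have hj2 : 2 ≤ j := (Finset.mem_Icc.mp hj).1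
    have hk := hkey j
    rw [my_iteratedDeriv_linear c3 hj2] at hk
    have hxtj : xt ^ j = lam ^ j * x ^ j := by rw [← hxtlam, mul_pow]
    rw [hxtj]
    linear_combination (a j * x ^ j / c1) * hk
  -- time derivative
  have hd1 : HasDerivAt (fun s => ut s xt) (pdt ut tt xt) (c1 * t + c2) := by
    rw [htt]
    have hdiff : DifferentiableAt ℝ (fun s => ut s xt) tt := by
      have heq2 : (fun s => ut s xt) = (fun p : ℝ × ℝ => ut p.1 p.2) ∘ (fun s => (s, xt)) := rfl
      rw [heq2]
      exact ((hut.differentiable (by simp)) (tt, xt)).comp tt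
        (differentiableAt_id.prodMk (differentiableAt_const xt))
    exact hdiff.hasDerivAt
  have hlin : HasDerivAt (fun s : ℝ => c1 * s + c2) c1 t := by
    simpa using ((hasDerivAt_id t).const_mul c1).add_const c2
  have hφ : HasDerivAt (fun s => ut (c1 * s + c2) xt) (pdt ut tt xt * c1) t :=
    hd1.comp (h := fun s : ℝ => c1 * s + c2) t hlin
  have hg : HasDerivAt (fun s => xt / c4 * Real.exp (-(c3 * s)))
      (xt / c4 * (Real.exp (-(c3 * t)) * -c3)) t := by
    have h0 : HasDerivAt (fun s : ℝ => -(c3 * s)) (-c3) t := by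
      simpa using ((hasDerivAt_id t).const_mul c3).fun_neg
    exact h0.exp.const_mul (xt / c4)
  have h1 : HasDerivAt (fun s => u s (xt / c4 * Real.exp (-(c3 * s))))
      (pdt u t (xt / c4 * Real.exp (-(c3 * t))) * 1
        + pdx u 1 t (xt / c4 * Real.exp (-(c3 * t)))
          * (xt / c4 * (Real.exp (-(c3 * t)) * -c3))) t :=
    my_hasDerivAt_comp2 hu (hasDerivAt_id t) hg
  have h2 : HasDerivAt (fun s => c3 * (xt / c4 * Real.exp (-(c3 * s))))
      (c3 * (xt / c4 * (Real.exp (-(c3 * t)) * -c3))) t := hg.const_mul c3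
  have hA : HasDerivAt (fun s => c4 * Real.exp (c3 * s) / c1)
      (c4 * (Real.exp (c3 * t) * c3) / c1) t := by
    have h0 : HasDerivAt (fun s : ℝ => c3 * s) c3 t := by
      simpa using (hasDerivAt_id t).const_mul c3
    exact (h0.exp.const_mul c4).div_const c1
  have hψ : HasDerivAt
      (fun s => c4 * Real.exp (c3 * s) / c1
        * (u s (xt / c4 * Real.exp (-(c3 * s))) + c3 * (xt / c4 * Real.exp (-(c3 * s)))))
      (c4 * (Real.exp (c3 * t) * c3) / c1
        * (u t (xt / c4 * Real.exp (-(c3 * t))) + c3 * (xt / c4 * Real.exp (-(c3 * t))))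
       + c4 * Real.exp (c3 * t) / c1
        * (pdt u t (xt / c4 * Real.exp (-(c3 * t))) * 1
          + pdx u 1 t (xt / c4 * Real.exp (-(c3 * t)))
            * (xt / c4 * (Real.exp (-(c3 * t)) * -c3))
          + c3 * (xt / c4 * (Real.exp (-(c3 * t)) * -c3)))) t :=
    hA.mul (h1.add h2)
  have hψφ : ∀ s : ℝ, ut (c1 * s + c2) xt
      = c4 * Real.exp (c3 * s) / c1
        * (u s (xt / c4 * Real.exp (-(c3 * s))) + c3 * (xt / c4 * Real.exp (-(c3 * s)))) := by
    intro s
    have h := hutdef s (xt / c4 * Real.exp (-(c3 * s)))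
    have e2 : Real.exp (c3 * s) * Real.exp (-(c3 * s)) = 1 := by rw [← Real.exp_add]; simp
    have e3 : c4 * Real.exp (c3 * s) * (xt / c4 * Real.exp (-(c3 * s))) = xt := by
      field_simp; linear_combination xt * e2
    rw [e3] at h
    exact h
  have hψ2 : HasDerivAt (fun s => ut (c1 * s + c2) xt)
      (c4 * (Real.exp (c3 * t) * c3) / c1
        * (u t (xt / c4 * Real.exp (-(c3 * t))) + c3 * (xt / c4 * Real.exp (-(c3 * t))))
       + c4 * Real.exp (c3 * t) / c1
        * (pdt u t (xt / c4 * Real.exp (-(c3 * t))) * 1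
          + pdx u 1 t (xt / c4 * Real.exp (-(c3 * t)))
            * (xt / c4 * (Real.exp (-(c3 * t)) * -c3))
          + c3 * (xt / c4 * (Real.exp (-(c3 * t)) * -c3)))) t :=
    hψ.congr_of_eventuallyEq (Filter.Eventually.of_forall hψφ)
  have huniq := hφ.unique hψ2
  have hpdt : pdt ut tt xt
      = lam / c1 ^ 2 * (pdt u t x + c3 * u t x - c3 * x * pdx u 1 t x) := by
    rw [hlam, hx]
    field_simp at huniq ⊢
    linear_combination huniq
  -- conclusion
  rw [hpdt, hutx, hpdx1, hsum, ← hxtlam]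
  linear_combination lam / c1 ^ 2 * hueq t x
end

section
/- The effective generalized equivalence group of the normalized subclass F_{II,1}: let r ≥ 2, a₂, …, a_r real with a_r ≠ 0, a₀₁ ≠ 0, a₀₀, b₀ real, and let c₁ ≠ 0, c₂, c₃, c₄ be real constants. Set X¹(t) = exp(−c₃/a₀₁ + c₄e^{a₀₁t/2}). If u solves u_t + u u_x = Σ_{j=2}^r a_j x^j u_j + (a₀₁ ln x + a₀₀) u + x(−(a₀₁²/4) ln²x + (a₀₁²/4 − a₀₀a₀₁/2) ln x + b₀) on ℝ × (0,∞), then the function ũ defined by ũ(c₁t + c₂/a₀₁, X¹(t)x) = (X¹(t)/c₁)·(u(t,x) + (c₄a₀₁/2)e^{a₀₁t/2}x) solves the equation of the same form with parameters ã_j = a_j/c₁, ã₀₁ = a₀₁/c₁, ã₀₀ = (a₀₀ + c₃)/c₁, b̃₀ = (4b₀ + (a₀₁ − 2a₀₀)c₃ − c₃²)/(4c₁²), namely ũ_t + ũ ũ_x = Σ_{j=2}^r ã_j x̃^j ũ_j + (ã₀₁ ln x̃ + ã₀₀) ũ + x̃(−(ã₀₁²/4) ln²x̃ + (ã₀₁²/4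 − ã₀₀ã₀₁/2) ln x̃ + b̃₀) on the image domain (contained in ℝ × (0,∞)). -/
open Real Set

private lemma cdOn_iter {f : ℝ → ℝ} {s : Set ℝ} (hs : IsOpen s)
    (hf : ContDiffOn ℝ (⊤ : ℕ∞) f s) : ∀ n : ℕ, ContDiffOn ℝ (⊤ : ℕ∞) (iteratedDeriv n f) s := by
  intro n
  induction n with
  | zero => simpa [iteratedDeriv_zero] using hf
  | succ n ih =>
      rw [iteratedDeriv_succ]
      exact ih.deriv_of_isOpen hs (by simp)

private lemma diffAt_iter {f : ℝ → ℝ} {s : Set ℝ} (hs : IsOpen s)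
    (hf : ContDiffOn ℝ (⊤ : ℕ∞) f s) (n : ℕ) {z : ℝ} (hz : z ∈ s) :
    DifferentiableAt ℝ (iteratedDeriv n f) z :=
  ((cdOn_iter hs hf n).contDiffAt (hs.mem_nhds hz)).differentiableAt (by simp)

private lemma spatial {g f : ℝ → ℝ} {X c1 k : ℝ} (hX : 0 < X)
    (hf : ContDiffOn ℝ (⊤ : ℕ∞) f (Ioi 0))
    (hbase : ∀ y ∈ Ioi (0:ℝ), g y = X / c1 * f (y / X) + k / c1 * y) :
    ∀ j : ℕ, ∀ y ∈ Ioi (0:ℝ), iteratedDeriv j g y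
      = X / c1 * (1/X)^j * iteratedDeriv j f (y / X)
        + k / c1 * (if j = 0 then y else if j = 1 then 1 else 0) := by
  intro j
  induction j with
  | zero => intro y hy; simpa [iteratedDeriv_zero] using hbase y hy
  | succ j ih =>
      intro y hy
      rw [iteratedDeriv_succ]
      have hev : iteratedDeriv j g =ᶠ[nhds y] fun z =>
          X / c1 * (1/X)^j * iteratedDeriv j f (z / X)
            + k / c1 * (if j = 0 then z else if j = 1 then 1 else 0) :=
        Filter.eventuallyEq_of_mem (isOpen_Ioi.mem_nhds hy) (fun z hz => ih z hz)
      rw [hev.deriv_eq]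
      have hyX : y / X ∈ Ioi (0:ℝ) := div_pos hy hX
      have h2 : HasDerivAt (iteratedDeriv j f) (iteratedDeriv (j+1) f (y/X)) (y/X) := by
        rw [iteratedDeriv_succ]
        exact (diffAt_iter isOpen_Ioi hf j hyX).hasDerivAt
      have hdf : HasDerivAt (fun z : ℝ => iteratedDeriv j f (z / X))
          (iteratedDeriv (j+1) f (y/X) * (1/X)) y := by
        have := h2.comp y ((hasDerivAt_id y).div_const X)
        exact this
      have hE : HasDerivAt (fun z : ℝ => (if j = 0 then z else if j = 1 then (1:ℝ) else 0))
          ((if j + 1 = 0 then y else if j + 1 = 1 then 1 else 0) : ℝ) y := by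
        match j with
        | 0 => simpa using hasDerivAt_id' y
        | 1 => simpa using hasDerivAt_const y (1:ℝ)
        | (n+2) => simpa using hasDerivAt_const y (0:ℝ)
      have htot := (hdf.const_mul (X / c1 * (1/X)^j)).add (hE.const_mul (k / c1))
      refine htot.deriv.trans ?_
      ring

set_option maxHeartbeats 2000000 in
theorem stmt13 (r : ℕ) (hr : 2 ≤ r)
    (a : ℕ → ℝ) (har : a r ≠ 0) (a01 : ℝ) (ha01 : a01 ≠ 0) (a00 b0 : ℝ)
    (c1 c2 c3 c4 : ℝ) (hc1 : c1 ≠ 0)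
    (X1 : ℝ → ℝ)
    (hX1def : ∀ t : ℝ, X1 t = Real.exp (-c3 / a01 + c4 * Real.exp (a01 * t / 2)))
    (u : ℝ → ℝ → ℝ)
    (hu : ContDiffOn ℝ (⊤ : ℕ∞) (fun p : ℝ × ℝ => u p.1 p.2) (univ ×ˢ Ioi (0 : ℝ)))
    (hueq : ∀ t : ℝ, ∀ x ∈ Ioi (0 : ℝ),
      pdt u t x + u t x * pdx u 1 t x
        = ∑ j ∈ Finset.Icc 2 r, a j * x ^ j * pdx u j t x
          + (a01 * Real.log x + a00) * u t x
          + x * (-(a01 ^ 2 / 4) * (Real.log x) ^ 2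
              + (a01 ^ 2 / 4 - a00 * a01 / 2) * Real.log x + b0))
    (ut : ℝ → ℝ → ℝ)
    (hut : ContDiffOn ℝ (⊤ : ℕ∞) (fun p : ℝ × ℝ => ut p.1 p.2) (univ ×ˢ Ioi (0 : ℝ)))
    (hutdef : ∀ t : ℝ, ∀ x ∈ Ioi (0 : ℝ),
      ut (c1 * t + c2 / a01) (X1 t * x)
        = X1 t / c1 * (u t x + c4 * a01 / 2 * Real.exp (a01 * t / 2) * x)) :
    ∀ tt : ℝ, ∀ xt ∈ Ioi (0 : ℝ),
      pdt ut tt xt + ut tt xt * pdx ut 1 tt xt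
        = ∑ j ∈ Finset.Icc 2 r, a j / c1 * xt ^ j * pdx ut j tt xt
          + (a01 / c1 * Real.log xt + (a00 + c3) / c1) * ut tt xt
          + xt * (-((a01 / c1) ^ 2 / 4) * (Real.log xt) ^ 2
              + ((a01 / c1) ^ 2 / 4 - (a00 + c3) / c1 * (a01 / c1) / 2) * Real.log xt
              + (4 * b0 + (a01 - 2 * a00) * c3 - c3 ^ 2) / (4 * c1 ^ 2)) := by
  intro tt xt hxt
  have hx0 : (0:ℝ) < xt := hxt
  have hXpos : ∀ s : ℝ, 0 < X1 s := fun s => by rw [hX1def]; positivity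
  set t : ℝ := (tt - c2 / a01) / c1 with ht
  set X : ℝ := X1 t with hXdef
  have hX0 : 0 < X := hXpos t
  have hXne : X ≠ 0 := ne_of_gt hX0
  set x : ℝ := xt / X with hxdef
  have hxpos : 0 < x := div_pos hx0 hX0
  have hxmem : x ∈ Ioi (0:ℝ) := hxpos
  have hxne : x ≠ 0 := ne_of_gt hxpos
  have hXx : X * x = xt := by rw [hxdef]; field_simp
  set K : ℝ := c4 * a01 / 2 * Real.exp (a01 * t / 2) with hKdef
  have httt : c1 * t + c2 / a01 = tt := by rw [ht]; field_simp; ring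
  -- base identity for spatial slice
  have hbase : ∀ y ∈ Ioi (0:ℝ), ut tt y = X / c1 * u t (y / X) + K / c1 * y := by
    intro y hy
    have h1 := hutdef t (y / X) (div_pos hy hX0)
    have h3 : X1 t * (y / X) = y := by rw [← hXdef]; field_simp
    rw [httt, h3, ← hXdef] at h1
    rw [h1]; field_simp; ring
  -- slice smoothness
  have hslice : ContDiffOn ℝ (⊤ : ℕ∞) (u t) (Ioi 0) := by
    have hmk : ContDiff ℝ (⊤ : ℕ∞) (fun y : ℝ => ((t, y) : ℝ × ℝ)) :=
      contDiff_const.prodMk contDiff_id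
    exact hu.comp hmk.contDiffOn (fun y hy => ⟨mem_univ t, hy⟩)
  have hspat := spatial hX0 hslice hbase
  have hxtX : xt / X = x := hxdef.symm
  have hutval : ut tt xt = X / c1 * u t x + K / c1 * xt := by
    rw [hbase xt hxt, hxtX]
  have hpdx1 : pdx ut 1 tt xt = 1 / c1 * pdx u 1 t x + K / c1 := by
    have := hspat 1 xt hxt
    rw [hxtX] at this
    simp only [pdx, this]
    field_simp
    simp
  have hpdxj : ∀ j ∈ Finset.Icc 2 r, pdx ut j tt xt = X / c1 * (1/X)^j * pdx u j t x := by
    intro j hj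
    obtain ⟨hj2, _⟩ := Finset.mem_Icc.mp hj
    have := hspat j xt hxt
    rw [hxtX] at this
    have hj0 : j ≠ 0 := by omega
    have hj1 : j ≠ 1 := by omega
    simp only [pdx, this, hj0, hj1, if_false, mul_zero, add_zero]
  -- sum identity
  have hsum : ∑ j ∈ Finset.Icc 2 r, a j / c1 * xt ^ j * pdx ut j tt xt
      = X / c1 ^ 2 * ∑ j ∈ Finset.Icc 2 r, a j * x ^ j * pdx u j t x := by
    rw [Finset.mul_sum]
    refine Finset.sum_congr rfl (fun j hj => ?_)
    rw [hpdxj j hj, ← hXx, mul_pow]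
    have hXjne : X ^ j ≠ 0 := pow_ne_zero _ hXne
    field_simp
    rw [mul_assoc (a j), ← mul_pow, mul_one_div_cancel hXne, one_pow, mul_one]
  -- time derivative
  have hmemU : ((t, x) : ℝ × ℝ) ∈ (univ : Set ℝ) ×ˢ Ioi (0:ℝ) := ⟨mem_univ t, hxmem⟩
  have hopen : IsOpen ((univ : Set ℝ) ×ˢ Ioi (0:ℝ)) := isOpen_univ.prod isOpen_Ioi
  have hUd : DifferentiableAt ℝ (fun p : ℝ × ℝ => u p.1 p.2) (t, x) :=
    (hu.contDiffAt (hopen.mem_nhds hmemU)).differentiableAt (by simp)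
  have hfd := hUd.hasFDerivAt
  set f' := fderiv ℝ (fun p : ℝ × ℝ => u p.1 p.2) (t, x) with hf'
  have hUt : pdt u t x = f' (1, 0) := by
    have hc : HasDerivAt (fun s : ℝ => ((s, x) : ℝ × ℝ)) ((1:ℝ), (0:ℝ)) t :=
      (hasDerivAt_id t).prodMk (hasDerivAt_const t x)
    have h : HasDerivAt (fun s : ℝ => u s x) (f' (1, 0)) t := by have := hfd.comp_hasDerivAt t hc; exact this
    exact h.deriv
  have hU1 : pdx u 1 t x = f' (0, 1) := by
    have hc : HasDerivAt (fun y : ℝ => ((t, y) : ℝ × ℝ)) ((0:ℝ), (1:ℝ)) x :=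
      (hasDerivAt_const x t).prodMk (hasDerivAt_id x)
    have h : HasDerivAt (fun y : ℝ => u t y) (f' (0, 1)) x := hfd.comp_hasDerivAt x hc
    rw [pdx, iteratedDeriv_one]
    exact h.deriv
  have hτ : HasDerivAt (fun s : ℝ => (s - c2 / a01) / c1) (1 / c1) tt := by
    simpa using ((hasDerivAt_id tt).sub_const (c2 / a01)).div_const c1
  have hlin : HasDerivAt (fun s : ℝ => a01 * ((s - c2 / a01) / c1) / 2) (a01 / (2 * c1)) tt := by
    have h := (hτ.const_mul a01).div_const 2
    exact h.congr_deriv (by ring)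
  have hexp1 : HasDerivAt (fun s : ℝ => Real.exp (a01 * ((s - c2 / a01) / c1) / 2))
      (Real.exp (a01 * t / 2) * (a01 / (2 * c1))) tt := hlin.exp
  have hX1c : HasDerivAt (fun s : ℝ => X1 ((s - c2 / a01) / c1)) (X * K / c1) tt := by
    have hfun : (fun s : ℝ => X1 ((s - c2 / a01) / c1))
        = fun s : ℝ => Real.exp (-c3 / a01 + c4 * Real.exp (a01 * ((s - c2 / a01) / c1) / 2)) := by
      funext s; rw [hX1def]
    rw [hfun]
    have h := ((hexp1.const_mul c4).const_add (-c3 / a01)).exp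
    convert h using 1
    rw [hXdef, hX1def t, hKdef]
    ring
  have hξ : HasDerivAt (fun s : ℝ => xt / X1 ((s - c2 / a01) / c1)) (-(x * K / c1)) tt := by
    have h := (hasDerivAt_const tt xt).div hX1c (ne_of_gt (hXpos t))
    refine h.congr_deriv ?_
    rw [← ht, ← hXdef, hxdef]
    field_simp
    ring
  have hcurve : HasDerivAt
      (fun s : ℝ => (((s - c2/a01)/c1, xt / X1 ((s - c2/a01)/c1)) : ℝ × ℝ))
      ((1 / c1, -(x * K / c1)) : ℝ × ℝ) tt := hτ.prodMk hξ
  have hucomp : HasDerivAt (fun s : ℝ => u ((s - c2/a01)/c1) (xt / X1 ((s - c2/a01)/c1)))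
      (f' (1 / c1, -(x * K / c1))) tt := by
      have := hfd.comp_hasDerivAt tt hcurve; exact this
  have hlinval : f' (1 / c1, -(x * K / c1))
      = 1 / c1 * pdt u t x - x * K / c1 * pdx u 1 t x := by
    have hv : ((1 / c1, -(x * K / c1)) : ℝ × ℝ)
        = (1 / c1) • ((1, 0) : ℝ × ℝ) + (-(x * K / c1)) • ((0, 1) : ℝ × ℝ) := by
      simp
    rw [hv, map_add, map_smul, map_smul, smul_eq_mul, smul_eq_mul, ← hUt, ← hU1]
    ring
  have hkc : HasDerivAt (fun s : ℝ => c4 * a01 / 2 * Real.exp (a01 * ((s - c2/a01)/c1) / 2))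
      (K * (a01 / (2 * c1))) tt := by
    have h := hexp1.const_mul (c4 * a01 / 2)
    refine h.congr_deriv ?_
    rw [hKdef]
    ring
  have heq : (fun s : ℝ => ut s xt) = fun s : ℝ =>
      X1 ((s - c2/a01)/c1) / c1 * u ((s - c2/a01)/c1) (xt / X1 ((s - c2/a01)/c1))
        + (c4 * a01 / 2 * Real.exp (a01 * ((s - c2/a01)/c1) / 2)) * xt / c1 := by
    funext s
    have h1 := hutdef ((s - c2/a01)/c1) (xt / X1 ((s - c2/a01)/c1))
      (div_pos hx0 (hXpos _))
    have h2 : c1 * ((s - c2/a01)/c1) + c2/a01 = s := by field_simp; ring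
    have h3 : X1 ((s - c2/a01)/c1) * (xt / X1 ((s - c2/a01)/c1)) = xt := by
      rw [mul_comm, div_mul_cancel₀ _ (ne_of_gt (hXpos _))]
    rw [h2, h3] at h1
    set Y : ℝ := X1 ((s - c2/a01)/c1) with hY
    have hYne : Y ≠ 0 := ne_of_gt (hXpos _)
    rw [h1]
    field_simp
  have hpdtval : pdt ut tt xt = (X * K / c1) / c1 * u t x
      + X / c1 * (1 / c1 * pdt u t x - x * K / c1 * pdx u 1 t x)
      + K * (a01 / (2 * c1)) * xt / c1 := by
    have hG := ((hX1c.div_const c1).mul hucomp).add ((hkc.mul_const xt).div_const c1)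
    replace hG : HasDerivAt (fun s : ℝ => ut s xt)
        (X * K / c1 / c1 * u ((tt - c2 / a01) / c1) (xt / X1 ((tt - c2 / a01) / c1))
          + X1 ((tt - c2 / a01) / c1) / c1 * f' (1 / c1, -(x * K / c1))
          + K * (a01 / (2 * c1)) * xt / c1) tt := by rw [heq]; exact hG
    have hdv := hG.deriv
    show deriv (fun s => ut s xt) tt = _
    rw [hdv, ← ht, ← hXdef, hxtX, hlinval]
  -- log identity
  have hlxt : Real.log xt = -c3/a01 + 2*K/a01 + Real.log x := by
    rw [← hXx, Real.log_mul hXne hxne]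
    congr 1
    rw [hXdef, hX1def t, Real.log_exp, hKdef]
    field_simp
  -- use the PDE for u
  have hS := hueq t x hxmem
  have hsum2 : ∑ j ∈ Finset.Icc 2 r, a j * x ^ j * pdx u j t x
      = pdt u t x + u t x * pdx u 1 t x - (a01 * Real.log x + a00) * u t x
        - x * (-(a01^2/4) * (Real.log x)^2 + (a01^2/4 - a00*a01/2) * Real.log x + b0) := by
    linarith [hS]
  rw [hpdtval, hutval, hpdx1, hsum, hsum2, hlxt, ← hXx]
  field_simp
  ring
end
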